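/- arXiv:2010.07251 — 10 statements merged into one kernel-verified Lean document; each statement's English description precedes it below -/
import Mathlib

section
/- For any random variables X and Y taking values in [0,1], and any function f : [0,1] → ℝ of bounded variation with total variation V(f), one has |E f(X) − E f(Y)| ≤ V(f) · sup_{0 ≤ t ≤ 1} |P(X ≤ t) − P(Y ≤ t)|. -/
/-!
By the Jordan decomposition, `f = p - q` on `[0,1]` with `p`, `q` monotone and
`(p 1 - p 0) + (q 1 - q 0) = V(f)`, so it suffices to show
`|E g(X) - E g(Y)| ≤ (g 1 - g 0) K` for monotone `g`, where `K` is the Kolmogorov distance.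
By the layer-cake formula, `E g(X) - g 0 = ∫₀^{g 1 - g 0} P(g(X) - g 0 ≥ u) du`, and the
superlevel sets of a monotone function are upper sets of `ℝ`, i.e. half-lines. For open
half-lines the probabilities under the two laws differ by at most `K` directly; for closed
ones pass to the left limits of the distribution functions.
-/

open MeasureTheory

section

open ProbabilityTheory Set Filter Function

theorem IsUpperSet.eq_empty_or_univ_or_Ici_or_Ioi {α : Type*}
    [ConditionallyCompleteLinearOrder α] {U : Set α} (hU : IsUpperSet U) :
    U = ∅ ∨ U = univ ∨ U = Ici (sInf U) ∨ U = Ioi (sInf U) := by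
  rcases U.eq_empty_or_nonempty with rfl | hne
  · exact Or.inl rfl
  by_cases hbdd : BddBelow U
  · by_cases hmem : sInf U ∈ U
    · exact Or.inr <| Or.inr <| Or.inl <| Subset.antisymm (fun x hx ↦ csInf_le hbdd hx)
        (fun x hx ↦ hU hx hmem)
    · refine Or.inr <| Or.inr <| Or.inr <| Subset.antisymm
        (fun x hx ↦ (csInf_le hbdd hx).lt_of_ne fun h ↦ hmem (h ▸ hx)) fun x hx ↦ ?_
      obtain ⟨y, hy, hyx⟩ := exists_lt_of_csInf_lt hne hx
      exact hU hyx.le hy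
  · refine Or.inr <| Or.inl <| eq_univ_of_forall fun x ↦ ?_
    obtain ⟨y, hy, hyx⟩ := not_bddBelow_iff.1 hbdd x
    exact hU hyx.le hy

variable {μ ν : Measure ℝ} {a b : ℝ}

lemma measureReal_Ioi_eq_one_sub_cdf [IsProbabilityMeasure μ] (x : ℝ) :
    μ.real (Ioi x) = 1 - cdf μ x := by
  conv_lhs => rw [← measure_cdf μ]
  rw [measureReal_def, (cdf μ).measure_Ioi (tendsto_cdf_atTop μ),
    ENNReal.toReal_ofReal (sub_nonneg.2 (cdf_le_one μ x))]

lemma measureReal_Ici_eq_one_sub_leftLim_cdf [IsProbabilityMeasure μ] (x : ℝ) :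
    μ.real (Ici x) = 1 - leftLim (cdf μ) x := by
  conv_lhs => rw [← measure_cdf μ]
  rw [measureReal_def, (cdf μ).measure_Ici (tendsto_cdf_atTop μ),
    ENNReal.toReal_ofReal (sub_nonneg.2 ?_)]
  exact ((monotone_cdf μ).leftLim_le le_rfl).trans (cdf_le_one μ x)

lemma abs_leftLim_cdf_sub_le {K : ℝ} (hK : ∀ t, |cdf μ t - cdf ν t| ≤ K) (x : ℝ) :
    |leftLim (cdf μ) x - leftLim (cdf ν) x| ≤ K :=
  le_of_tendsto
    (((monotone_cdf μ).tendsto_leftLim x).sub ((monotone_cdf ν).tendsto_leftLim x)).abs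
    (Eventually.of_forall hK)

lemma abs_measureReal_sub_le_of_isUpperSet [IsProbabilityMeasure μ] [IsProbabilityMeasure ν]
    {K : ℝ} (hK : ∀ t, |cdf μ t - cdf ν t| ≤ K) {U : Set ℝ} (hU : IsUpperSet U) :
    |μ.real U - ν.real U| ≤ K := by
  have hK₀ : 0 ≤ K := (abs_nonneg _).trans (hK 0)
  rcases hU.eq_empty_or_univ_or_Ici_or_Ioi with hU | hU | hU | hU <;> rw [hU]
  · simpa using hK₀
  · simpa using hK₀
  · rw [measureReal_Ici_eq_one_sub_leftLim_cdf, measureReal_Ici_eq_one_sub_leftLim_cdf,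
      sub_sub_sub_cancel_left, abs_sub_comm]
    exact abs_leftLim_cdf_sub_le hK _
  · rw [measureReal_Ioi_eq_one_sub_cdf, measureReal_Ioi_eq_one_sub_cdf,
      sub_sub_sub_cancel_left, abs_sub_comm]
    exact hK _

lemma le_of_ae_mem_Icc [NeZero μ] (hμ : ∀ᵐ x ∂μ, x ∈ Icc a b) : a ≤ b :=
  let ⟨_, hx⟩ := hμ.exists
  hx.1.trans hx.2

lemma MonotoneOn.integrable_of_ae_mem_Icc [IsFiniteMeasure μ] {g : ℝ → ℝ}
    (hg : MonotoneOn g (Icc a b)) (hμ : ∀ᵐ x ∂μ, x ∈ Icc a b) : Integrable g μ := by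
  have := hg.integrableOn_isCompact (μ := μ) isCompact_Icc
  rwa [IntegrableOn, Measure.restrict_eq_self_of_ae_mem hμ] at this

lemma Monotone.integral_eq_add_integral_Ioc [IsProbabilityMeasure μ] {g : ℝ → ℝ}
    (hg : Monotone g) (hμ : ∀ᵐ x ∂μ, x ∈ Icc a b) :
    ∫ x, g x ∂μ = g a + ∫ t in Ioc 0 (g b - g a), μ.real {x | t ≤ g x - g a} := by
  have hint : Integrable g μ := hg.monotoneOn _ |>.integrable_of_ae_mem_Icc hμ
  rw [← Integrable.integral_eq_integral_Ioc_meas_le (f := fun x ↦ g x - g a)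
    (hint.sub (integrable_const _)) (hμ.mono fun x hx ↦ sub_nonneg.2 (hg hx.1))
    (hμ.mono fun x hx ↦ sub_le_sub_right (hg hx.2) _), integral_sub hint (integrable_const _),
    integral_const, probReal_univ, one_smul, add_sub_cancel]

lemma Monotone.abs_integral_sub_le [IsProbabilityMeasure μ] [IsProbabilityMeasure ν]
    {g : ℝ → ℝ} (hg : Monotone g) (hμ : ∀ᵐ x ∂μ, x ∈ Icc a b) (hν : ∀ᵐ x ∂ν, x ∈ Icc a b)
    {K : ℝ} (hK : ∀ t, |cdf μ t - cdf ν t| ≤ K) :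
    |∫ x, g x ∂μ - ∫ x, g x ∂ν| ≤ (g b - g a) * K := by
  have hM : 0 ≤ g b - g a := sub_nonneg.2 (hg (le_of_ae_mem_Icc hμ))
  have hint : ∀ ρ : Measure ℝ, [IsProbabilityMeasure ρ] →
      IntegrableOn (fun t ↦ ρ.real {x | t ≤ g x - g a}) (Ioc 0 (g b - g a)) := fun ρ _ ↦
    (AntitoneOn.integrableOn_isCompact isCompact_Icc fun s _ t _ hst ↦
      measureReal_mono fun x (hx : t ≤ g x - g a) ↦ hst.trans hx).mono_set Ioc_subset_Icc_self
  rw [hg.integral_eq_add_integral_Ioc hμ, hg.integral_eq_add_integral_Ioc hν,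
    add_sub_add_left_eq_sub, ← integral_sub (hint μ) (hint ν), ← Real.norm_eq_abs]
  calc _ ≤ K * volume.real (Ioc 0 (g b - g a)) := by
        refine norm_setIntegral_le_of_norm_le_const measure_Ioc_lt_top fun t _ ↦ ?_
        exact abs_measureReal_sub_le_of_isUpperSet hK fun x y hxy (hx : t ≤ g x - g a) ↦
          hx.trans (sub_le_sub_right (hg hxy) _)
    _ = (g b - g a) * K := by rw [Real.volume_real_Ioc_of_le hM, sub_zero, mul_comm]

lemma MonotoneOn.abs_integral_sub_le [IsProbabilityMeasure μ] [IsProbabilityMeasure ν]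
    {g : ℝ → ℝ} (hg : MonotoneOn g (Icc a b)) (hμ : ∀ᵐ x ∂μ, x ∈ Icc a b)
    (hν : ∀ᵐ x ∂ν, x ∈ Icc a b) {K : ℝ} (hK : ∀ t, |cdf μ t - cdf ν t| ≤ K) :
    |∫ x, g x ∂μ - ∫ x, g x ∂ν| ≤ (g b - g a) * K := by
  have hab := le_of_ae_mem_Icc hμ
  set G := IccExtend hab fun x : Icc a b ↦ g x
  have hG : Monotone G := Monotone.IccExtend hab (monotoneOn_iff_monotone.1 hg)
  have hGg : ∀ ρ : Measure ℝ, (∀ᵐ x ∂ρ, x ∈ Icc a b) → ∫ x, g x ∂ρ = ∫ x, G x ∂ρ := fun ρ hρ ↦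
    integral_congr_ae <| hρ.mono fun x hx ↦ (IccExtend_of_mem hab (fun y : Icc a b ↦ g y) hx).symm
  rw [hGg μ hμ, hGg ν hν]
  simpa [G] using hG.abs_integral_sub_le hμ hν hK

lemma BoundedVariationOn.abs_integral_sub_le [IsProbabilityMeasure μ] [IsProbabilityMeasure ν]
    {f : ℝ → ℝ} (hf : BoundedVariationOn f (Icc a b)) (hμ : ∀ᵐ x ∂μ, x ∈ Icc a b)
    (hν : ∀ᵐ x ∂ν, x ∈ Icc a b) {K : ℝ} (hK : ∀ t, |cdf μ t - cdf ν t| ≤ K) :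
    |∫ x, f x ∂μ - ∫ x, f x ∂ν| ≤ (eVariationOn f (Icc a b)).toReal * K := by
  have hab := le_of_ae_mem_Icc hμ
  obtain ⟨p, q, hp, hq, rfl, hpq⟩ :=
    hf.locallyBoundedVariationOn.exists_monotoneOn_sub_monotoneOn'
  have hsplit : ∀ ρ : Measure ℝ, [IsFiniteMeasure ρ] → (∀ᵐ x ∂ρ, x ∈ Icc a b) →
      ∫ x, (p - q) x ∂ρ = ∫ x, p x ∂ρ - ∫ x, q x ∂ρ := fun ρ _ hρ ↦
    integral_sub (hp.integrable_of_ae_mem_Icc hρ) (hq.integrable_of_ae_mem_Icc hρ)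
  have hV : (eVariationOn (p - q) (Icc a b)).toReal = p b - p a + (q b - q a) := by
    rw [hpq a ⟨le_rfl, hab⟩ b ⟨hab, le_rfl⟩, variationOnFromTo.eq_of_le _ _ hab, inter_self]
  rw [hsplit μ hμ, hsplit ν hν, hV]
  calc _ = |(∫ x, p x ∂μ - ∫ x, p x ∂ν) - (∫ x, q x ∂μ - ∫ x, q x ∂ν)| := by ring_nf
    _ ≤ |∫ x, p x ∂μ - ∫ x, p x ∂ν| + |∫ x, q x ∂μ - ∫ x, q x ∂ν| := abs_sub _ _
    _ ≤ (p b - p a) * K + (q b - q a) * K :=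
      add_le_add (hp.abs_integral_sub_le hμ hν hK) (hq.abs_integral_sub_le hμ hν hK)
    _ = _ := by ring

lemma BoundedVariationOn.aestronglyMeasurable {f : ℝ → ℝ} {s : Set ℝ} (hs : MeasurableSet s)
    (hf : BoundedVariationOn f s) (hμ : ∀ᵐ x ∂μ, x ∈ s) : AEStronglyMeasurable f μ := by
  obtain ⟨p, q, hp, hq, rfl⟩ := hf.locallyBoundedVariationOn.exists_monotoneOn_sub_monotoneOn
  rw [← Measure.restrict_eq_self_of_ae_mem hμ]
  exact ((aemeasurable_restrict_of_monotoneOn hs hp).sub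
    (aemeasurable_restrict_of_monotoneOn hs hq)).aestronglyMeasurable

lemma cdf_eq_zero_of_lt [IsProbabilityMeasure μ] (hμ : ∀ᵐ x ∂μ, a ≤ x) {t : ℝ} (ht : t < a) :
    cdf μ t = 0 := by
  rw [cdf_eq_real, measureReal_eq_zero_iff, measure_eq_zero_iff_ae_notMem]
  exact hμ.mono fun x hx (hxt : x ≤ t) ↦ (ht.trans_le hx).not_ge hxt

lemma cdf_eq_one_of_le [IsProbabilityMeasure μ] (hμ : ∀ᵐ x ∂μ, x ≤ b) {t : ℝ} (ht : b ≤ t) :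
    cdf μ t = 1 := by
  rw [cdf_eq_real, measureReal_def, ENNReal.toReal_eq_one_iff,
    ← prob_compl_eq_zero_iff measurableSet_Iic, measure_eq_zero_iff_ae_notMem]
  exact hμ.mono fun x hx hxt ↦ hxt (hx.trans ht)

lemma abs_cdf_sub_le_iSup_Icc [IsProbabilityMeasure μ] [IsProbabilityMeasure ν]
    (hμ : ∀ᵐ x ∂μ, x ∈ Icc a b) (hν : ∀ᵐ x ∂ν, x ∈ Icc a b) (t : ℝ) :
    |cdf μ t - cdf ν t| ≤ ⨆ s : Icc a b, |cdf μ s - cdf ν s| := by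
  have hbdd : BddAbove (range fun s : Icc a b ↦ |cdf μ s - cdf ν s|) :=
    ⟨1, forall_mem_range.2 fun s ↦ abs_sub_le_iff.2
      ⟨by linarith [cdf_le_one μ s, cdf_nonneg ν s], by linarith [cdf_le_one ν s, cdf_nonneg μ s]⟩⟩
  rcases lt_or_ge t a with hta | hat
  · rw [cdf_eq_zero_of_lt (hμ.mono fun _ hx ↦ hx.1) hta,
      cdf_eq_zero_of_lt (hν.mono fun _ hx ↦ hx.1) hta, sub_self, abs_zero]
    exact Real.iSup_nonneg fun _ ↦ abs_nonneg _
  rcases le_or_gt t b with htb | hbt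
  · exact le_ciSup hbdd ⟨t, hat, htb⟩
  · rw [cdf_eq_one_of_le (hμ.mono fun _ hx ↦ hx.2) hbt.le,
      cdf_eq_one_of_le (hν.mono fun _ hx ↦ hx.2) hbt.le, sub_self, abs_zero]
    exact Real.iSup_nonneg fun _ ↦ abs_nonneg _

lemma cdf_map_eq_toReal_measure_le {Ω : Type*} [MeasurableSpace Ω] (P : Measure Ω)
    [IsProbabilityMeasure P] {X : Ω → ℝ} (hX : Measurable X) (t : ℝ) :
    cdf (P.map X) t = (P {ω | X ω ≤ t}).toReal := by
  have := Measure.isProbabilityMeasure_map (μ := P) hX.aemeasurable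
  rw [cdf_eq_real, measureReal_def, Measure.map_apply hX measurableSet_Iic]
  rfl

end

theorem stmt0_general
    {Ω : Type*} [MeasurableSpace Ω] (ℙ : Measure Ω) [IsProbabilityMeasure ℙ]
    (X Y : Ω → ℝ) (hX : Measurable X) (hY : Measurable Y)
    (hXrange : ∀ ω, X ω ∈ Set.Icc (0:ℝ) 1) (hYrange : ∀ ω, Y ω ∈ Set.Icc (0:ℝ) 1)
    (f : ℝ → ℝ) (hfBV : BoundedVariationOn f (Set.Icc 0 1)) :
    |(∫ ω, f (X ω) ∂ℙ) - ∫ ω, f (Y ω) ∂ℙ| ≤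
      (eVariationOn f (Set.Icc 0 1)).toReal *
        ⨆ t : Set.Icc (0:ℝ) 1,
          |(ℙ {ω | X ω ≤ (t : ℝ)}).toReal - (ℙ {ω | Y ω ≤ (t : ℝ)}).toReal| := by
  have := Measure.isProbabilityMeasure_map (μ := ℙ) hX.aemeasurable
  have := Measure.isProbabilityMeasure_map (μ := ℙ) hY.aemeasurable
  have hμ : ∀ᵐ x ∂ℙ.map X, x ∈ Set.Icc 0 1 :=
    (ae_map_iff hX.aemeasurable measurableSet_Icc).2 (ae_of_all _ hXrange)
  have hν : ∀ᵐ x ∂ℙ.map Y, x ∈ Set.Icc 0 1 :=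
    (ae_map_iff hY.aemeasurable measurableSet_Icc).2 (ae_of_all _ hYrange)
  simp_rw [← integral_map hX.aemeasurable (hfBV.aestronglyMeasurable measurableSet_Icc hμ),
    ← integral_map hY.aemeasurable (hfBV.aestronglyMeasurable measurableSet_Icc hν),
    ← cdf_map_eq_toReal_measure_le ℙ hX, ← cdf_map_eq_toReal_measure_le ℙ hY]
  exact hfBV.abs_integral_sub_le hμ hν (abs_cdf_sub_le_iSup_Icc hμ hν)

/-- For `[0,1]`-valued random variables `X`, `Y` and a function
`f` of bounded variation on `[0,1]` with total variation `V(f)`,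
`|E f(X) − E f(Y)| ≤ V(f) · sup_{0 ≤ t ≤ 1} |P(X ≤ t) − P(Y ≤ t)|`. -/
theorem stmt0
    {Ω : Type*} [MeasurableSpace Ω] (ℙ : Measure Ω) [IsProbabilityMeasure ℙ]
    (X Y : Ω → ℝ) (hX : Measurable X) (hY : Measurable Y)
    (hXrange : ∀ ω, X ω ∈ Set.Icc (0:ℝ) 1) (hYrange : ∀ ω, Y ω ∈ Set.Icc (0:ℝ) 1)
    (f : ℝ → ℝ) (hfBV : BoundedVariationOn f (Set.Icc 0 1))
    (hfX : Integrable (fun ω => f (X ω)) ℙ) (hfY : Integrable (fun ω => f (Y ω)) ℙ) :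
    |(∫ ω, f (X ω) ∂ℙ) - ∫ ω, f (Y ω) ∂ℙ| ≤
      (eVariationOn f (Set.Icc 0 1)).toReal *
        ⨆ t : Set.Icc (0:ℝ) 1,
          |(ℙ {ω | X ω ≤ (t : ℝ)}).toReal - (ℙ {ω | Y ω ≤ (t : ℝ)}).toReal| :=
  stmt0_general ℙ X Y hX hY hXrange hYrange f hfBV
end

section
/- Let X and ξ be independent [0,1]-valued random variables with ξ uniformly distributed on [0,1]. Define U = ξ·F(X) + (1−ξ)·F⁻(X), where F(x) = P(X ≤ x) and F⁻(x) = P(X < x). Then U is uniformly distributed on [0,1] and |U − X| ≤ sup_{0 ≤ t ≤ 1} |F(t) − t| almost surely. -/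
/-!
The pair `(X, ξ)` has law `μ ⊗ Unif[0,1]` with `μ` the law of `X`, so it suffices to compute
`P(U < a)` for the map `(x, s) ↦ s F(x) + (1 - s) F(x⁻)`. For `0 < a < 1` let `q` be the
`a`-quantile of `F`; right-continuity gives `F(q⁻) ≤ a ≤ F(q)`. Points `x < q` have `F(x) < a`
and points `x > q` have `F(x⁻) ≥ F(q) ≥ a`, so `U < a` exactly when `X < q`, or `X = q` and `ξ`
falls in an interval of length `(a - F(q⁻)) / (F(q) - F(q⁻))`. Hence
`P(U < a) = F(q⁻) + (a - F(q⁻)) = a`.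

The bound holds because `U` lies between `F(X⁻)` and `F(X)`, and `F(X⁻)` is a limit of values
`F(t)` with `t ↑ X`.
-/

open MeasureTheory ProbabilityTheory

open Set Filter Function

lemma MeasureTheory.Measure.ext_of_Iio_of_isProbabilityMeasure {α : Type*}
    [TopologicalSpace α] {_ : MeasurableSpace α} [SecondCountableTopology α] [LinearOrder α]
    [OrderTopology α] [BorelSpace α] (μ ν : Measure α) [IsProbabilityMeasure μ]
    [IsProbabilityMeasure ν] (h : ∀ a, μ (Iio a) = ν (Iio a)) : μ = ν :=
  Measure.ext_of_Ici μ ν fun a => by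
    rw [← compl_Iio, prob_compl_eq_one_sub measurableSet_Iio,
      prob_compl_eq_one_sub measurableSet_Iio, h a]

lemma volume_restrict_Icc_zero_one_Iio (a : ℝ) :
    volume.restrict (Icc (0 : ℝ) 1) (Iio a) = ENNReal.ofReal (min a 1) := by
  rw [Measure.restrict_congr_set Ico_ae_eq_Icc.symm, Measure.restrict_apply measurableSet_Iio,
    inter_comm, Ico_inter_Iio, Real.volume_Ico, sub_zero, min_comm]

section ConvexCombination

variable {lo hi a : ℝ}

lemma mem_Icc_of_convex_combination (hlh : lo ≤ hi) {s : ℝ} (hs : s ∈ Icc (0 : ℝ) 1) :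
    s * hi + (1 - s) * lo ∈ Icc lo hi := by
  obtain ⟨hs0, hs1⟩ := hs
  constructor <;> nlinarith

lemma volume_restrict_Icc_setOf_convex_combination_lt_of_lt (hlh : lo ≤ hi) (ha : hi < a) :
    volume.restrict (Icc (0 : ℝ) 1) {s | s * hi + (1 - s) * lo < a} = 1 := by
  have hsub : Icc (0 : ℝ) 1 ⊆ {s | s * hi + (1 - s) * lo < a} := fun s hs =>
    (mem_Icc_of_convex_combination hlh hs).2.trans_lt ha
  rw [Measure.restrict_apply_superset hsub, Real.volume_Icc, sub_zero, ENNReal.ofReal_one]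

lemma volume_restrict_Icc_setOf_convex_combination_lt_of_le (hlh : lo ≤ hi) (ha : a ≤ lo) :
    volume.restrict (Icc (0 : ℝ) 1) {s | s * hi + (1 - s) * lo < a} = 0 := by
  have hdisj : {s | s * hi + (1 - s) * lo < a} ∩ Icc (0 : ℝ) 1 = ∅ :=
    eq_empty_of_forall_notMem fun s ⟨hsa, hs⟩ =>
      (ha.trans (mem_Icc_of_convex_combination hlh hs).1).not_gt hsa
  rw [Measure.restrict_apply' measurableSet_Icc, hdisj, measure_empty]

lemma volume_restrict_Icc_setOf_convex_combination_lt_mul (hlo : lo ≤ a) (hhi : a ≤ hi) :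
    volume.restrict (Icc (0 : ℝ) 1) {s | s * hi + (1 - s) * lo < a} * ENNReal.ofReal (hi - lo)
      = ENNReal.ofReal (a - lo) := by
  rcases hlo.lt_or_eq with hlo | rfl
  · have hd : 0 < hi - lo := by linarith
    have hset : {s : ℝ | s * hi + (1 - s) * lo < a} = Iio ((a - lo) / (hi - lo)) := by
      ext s
      rw [mem_ofPred_eq, mem_Iio, lt_div_iff₀ hd]
      constructor <;> intro h <;> linarith
    rw [hset, volume_restrict_Icc_zero_one_Iio, min_eq_left ((div_le_one hd).2 (by linarith)),
      ← ENNReal.ofReal_mul (by positivity), div_mul_cancel₀ _ hd.ne']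
  · rw [volume_restrict_Icc_setOf_convex_combination_lt_of_le hhi le_rfl, zero_mul, sub_self,
      ENNReal.ofReal_zero]

end ConvexCombination

namespace StieltjesFunction

-- Junk value `0` unless `{x | a ≤ f x}` is nonempty and bounded below.
noncomputable def quantile (f : StieltjesFunction ℝ) (a : ℝ) : ℝ := sInf {x | a ≤ f x}

variable (f : StieltjesFunction ℝ) {a : ℝ}

lemma lt_of_lt_quantile (hbdd : BddBelow {x | a ≤ f x}) {x : ℝ} (hx : x < f.quantile a) :
    f x < a :=
  not_le.1 fun h => notMem_of_lt_csInf hx hbdd h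

lemma le_apply_quantile (hne : {x | a ≤ f x}.Nonempty) : a ≤ f (f.quantile a) := by
  refine ge_of_tendsto ((f.right_continuous _).mono Ioi_subset_Ici_self)
    (eventually_nhdsWithin_of_forall fun x hx => ?_)
  obtain ⟨y, hy, hyx⟩ := exists_lt_of_csInf_lt hne hx
  exact hy.trans (f.mono hyx.le)

lemma leftLim_quantile_le (hbdd : BddBelow {x | a ≤ f x}) : leftLim f (f.quantile a) ≤ a :=
  le_of_tendsto (f.mono.tendsto_leftLim _)
    (eventually_nhdsWithin_of_forall fun _ hx => (f.lt_of_lt_quantile hbdd hx).le)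

end StieltjesFunction

lemma sub_leftLim_le_of_abs_sub_le {F : ℝ → ℝ} (hF : Monotone F) (hF0 : ∀ t, 0 ≤ F t) {M : ℝ}
    (hM : ∀ t ∈ Icc (0 : ℝ) 1, |F t - t| ≤ M) {x : ℝ} (hx : x ∈ Icc (0 : ℝ) 1) :
    x - leftLim F x ≤ M := by
  rcases hx.1.eq_or_lt with rfl | hx0
  · have hlim : 0 ≤ leftLim F 0 := (hF0 (-1)).trans (hF.le_leftLim neg_one_lt_zero)
    linarith [(abs_nonneg _).trans (hM 0 ⟨le_rfl, zero_le_one⟩)]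
  · refine le_of_tendsto ((tendsto_nhdsWithin_of_tendsto_nhds tendsto_id).sub
      (hF.tendsto_leftLim x)) ?_
    filter_upwards [Ioo_mem_nhdsLT hx0] with t ht
    exact ((le_abs_self _).trans_eq (abs_sub_comm _ _)).trans (hM t ⟨ht.1.le, ht.2.le.trans hx.2⟩)

namespace ProbabilityTheory

variable (μ : Measure ℝ)

lemma leftLim_cdf_nonneg (x : ℝ) : 0 ≤ leftLim (cdf μ) x :=
  (cdf_nonneg μ (x - 1)).trans ((monotone_cdf μ).le_leftLim (sub_one_lt x))

noncomputable def distribTransform (p : ℝ × ℝ) : ℝ :=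
  p.2 * cdf μ p.1 + (1 - p.2) * leftLim (cdf μ) p.1

lemma measurable_distribTransform : Measurable (distribTransform μ) :=
  (measurable_snd.mul ((monotone_cdf μ).measurable.comp measurable_fst)).add
    ((measurable_const.sub measurable_snd).mul
      ((monotone_cdf μ).leftLim.measurable.comp measurable_fst))

lemma distribTransform_mem_Icc (x : ℝ) {s : ℝ} (hs : s ∈ Icc (0 : ℝ) 1) :
    distribTransform μ (x, s) ∈ Icc (leftLim (cdf μ) x) (cdf μ x) :=
  mem_Icc_of_convex_combination ((monotone_cdf μ).leftLim_le le_rfl) hs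

lemma abs_distribTransform_sub_le {x s : ℝ} (hx : x ∈ Icc (0 : ℝ) 1) (hs : s ∈ Icc (0 : ℝ) 1) :
    |distribTransform μ (x, s) - x| ≤ ⨆ t : Icc (0 : ℝ) 1, |cdf μ t - (t : ℝ)| := by
  have hbdd : BddAbove (range fun t : Icc (0 : ℝ) 1 => |cdf μ t - (t : ℝ)|) := by
    refine ⟨1, ?_⟩
    rintro _ ⟨t, rfl⟩
    rw [abs_le]
    constructor <;> linarith [cdf_nonneg μ t, cdf_le_one μ t, t.2.1, t.2.2]
  have hM : ∀ t ∈ Icc (0 : ℝ) 1, |cdf μ t - t| ≤ ⨆ t : Icc (0 : ℝ) 1, |cdf μ t - (t : ℝ)| :=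
    fun t ht => le_ciSup hbdd ⟨t, ht⟩
  obtain ⟨hlo, hhi⟩ := distribTransform_mem_Icc μ x hs
  have hcdf := (le_abs_self _).trans (hM x hx)
  have hleftLim := sub_leftLim_le_of_abs_sub_le (monotone_cdf μ) (cdf_nonneg μ) hM hx
  rw [abs_le]
  constructor <;> linarith

lemma ofReal_leftLim_cdf [IsProbabilityMeasure μ] (x : ℝ) :
    ENNReal.ofReal (leftLim (cdf μ) x) = μ (Iio x) := by
  have h := (cdf μ).measure_Iio (tendsto_cdf_atBot μ) x
  rwa [measure_cdf, sub_zero, eq_comm] at h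

lemma leftLim_cdf_eq_real [IsProbabilityMeasure μ] (x : ℝ) :
    leftLim (cdf μ) x = μ.real (Iio x) := by
  rw [measureReal_def, ← ofReal_leftLim_cdf, ENNReal.toReal_ofReal (leftLim_cdf_nonneg μ x)]

lemma measure_singleton_eq_ofReal_cdf_sub_leftLim [IsProbabilityMeasure μ] (x : ℝ) :
    μ {x} = ENNReal.ofReal (cdf μ x - leftLim (cdf μ) x) := by
  rw [← (cdf μ).measure_singleton, measure_cdf]

section Uniformity

variable {μ} {a x : ℝ}

lemma volume_restrict_Icc_setOf_distribTransform_lt_of_cdf_lt (h : cdf μ x < a) :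
    volume.restrict (Icc (0 : ℝ) 1) {s | distribTransform μ (x, s) < a} = 1 :=
  volume_restrict_Icc_setOf_convex_combination_lt_of_lt ((monotone_cdf μ).leftLim_le le_rfl) h

lemma volume_restrict_Icc_setOf_distribTransform_lt_of_le_leftLim (h : a ≤ leftLim (cdf μ) x) :
    volume.restrict (Icc (0 : ℝ) 1) {s | distribTransform μ (x, s) < a} = 0 :=
  volume_restrict_Icc_setOf_convex_combination_lt_of_le ((monotone_cdf μ).leftLim_le le_rfl) h

variable [IsProbabilityMeasure μ]

lemma volume_restrict_Icc_setOf_distribTransform_lt_mul_measure_singleton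
    (hlo : leftLim (cdf μ) x ≤ a) (hhi : a ≤ cdf μ x) :
    volume.restrict (Icc (0 : ℝ) 1) {s | distribTransform μ (x, s) < a} * μ {x}
      = ENNReal.ofReal (a - leftLim (cdf μ) x) := by
  rw [measure_singleton_eq_ofReal_cdf_sub_leftLim]
  exact volume_restrict_Icc_setOf_convex_combination_lt_mul hlo hhi

lemma lintegral_volume_restrict_Icc_setOf_distribTransform_lt_of_pos_of_nonempty (ha : 0 < a)
    (hne : {x | a ≤ cdf μ x}.Nonempty) :
    ∫⁻ x, volume.restrict (Icc (0 : ℝ) 1) {s | distribTransform μ (x, s) < a} ∂μ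
      = ENNReal.ofReal a := by
  set q := (cdf μ).quantile a
  have hbdd : BddBelow {x | a ≤ cdf μ x} := by
    obtain ⟨x₀, hx₀⟩ := eventually_atBot.1 ((tendsto_cdf_atBot μ).eventually (gt_mem_nhds ha))
    exact ⟨x₀, fun x hx => le_of_not_gt fun hlt => (hx₀ x hlt.le).not_ge hx⟩
  have hsections : ∀ x, volume.restrict (Icc (0 : ℝ) 1) {s | distribTransform μ (x, s) < a}
      = (Iio q).indicator 1 x + ({q} : Set ℝ).indicator
        (fun _ => volume.restrict (Icc (0 : ℝ) 1) {s | distribTransform μ (q, s) < a}) x := by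
    intro x
    rcases lt_trichotomy x q with hx | rfl | hx
    · rw [indicator_of_mem (show x ∈ Iio q from hx),
        indicator_of_notMem (show x ∉ ({q} : Set ℝ) from hx.ne), add_zero, Pi.one_apply,
        volume_restrict_Icc_setOf_distribTransform_lt_of_cdf_lt
          ((cdf μ).lt_of_lt_quantile hbdd hx)]
    · rw [indicator_of_notMem self_notMem_Iio, indicator_of_mem (mem_singleton _), zero_add]
    · rw [indicator_of_notMem (show x ∉ Iio q from hx.not_gt),
        indicator_of_notMem (show x ∉ ({q} : Set ℝ) from hx.ne'), add_zero,
        volume_restrict_Icc_setOf_distribTransform_lt_of_le_leftLim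
          (((cdf μ).le_apply_quantile hne).trans ((monotone_cdf μ).le_leftLim hx))]
  rw [lintegral_congr hsections, lintegral_add_left (measurable_one.indicator measurableSet_Iio),
    lintegral_indicator_one measurableSet_Iio,
    lintegral_indicator_const (measurableSet_singleton q),
    volume_restrict_Icc_setOf_distribTransform_lt_mul_measure_singleton
      ((cdf μ).leftLim_quantile_le hbdd) ((cdf μ).le_apply_quantile hne),
    ← ofReal_leftLim_cdf, ← ENNReal.ofReal_add (leftLim_cdf_nonneg μ q)
      (sub_nonneg.2 ((cdf μ).leftLim_quantile_le hbdd)), add_sub_cancel]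

lemma lintegral_volume_restrict_Icc_setOf_distribTransform_lt (a : ℝ) :
    ∫⁻ x, volume.restrict (Icc (0 : ℝ) 1) {s | distribTransform μ (x, s) < a} ∂μ
      = ENNReal.ofReal (min a 1) := by
  rcases le_or_gt a 0 with ha | ha
  · rw [min_eq_left (ha.trans zero_le_one), ENNReal.ofReal_of_nonpos ha,
      lintegral_congr fun x => volume_restrict_Icc_setOf_distribTransform_lt_of_le_leftLim
        (ha.trans (leftLim_cdf_nonneg μ x)), lintegral_zero]
  rcases {x | a ≤ cdf μ x}.eq_empty_or_nonempty with hempty | hne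
  · have hlt : ∀ x, cdf μ x < a := fun x => not_le.1 fun h => hempty.subset h
    have h1a : 1 ≤ a := le_of_tendsto' (tendsto_cdf_atTop μ) fun x => (hlt x).le
    rw [min_eq_right h1a, ENNReal.ofReal_one, lintegral_congr fun x =>
      volume_restrict_Icc_setOf_distribTransform_lt_of_cdf_lt (hlt x), lintegral_one, measure_univ]
  · rw [min_eq_left (((cdf μ).le_apply_quantile hne).trans (cdf_le_one μ _)),
      lintegral_volume_restrict_Icc_setOf_distribTransform_lt_of_pos_of_nonempty ha hne]

end Uniformity

theorem map_distribTransform_prod_volume_restrict_Icc [IsProbabilityMeasure μ] :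
    (μ.prod (volume.restrict (Icc (0 : ℝ) 1))).map (distribTransform μ)
      = volume.restrict (Icc (0 : ℝ) 1) := by
  have : IsProbabilityMeasure (volume.restrict (Icc (0 : ℝ) 1)) := ⟨by simp⟩
  have := Measure.isProbabilityMeasure_map (μ := μ.prod (volume.restrict (Icc (0 : ℝ) 1)))
    (measurable_distribTransform μ).aemeasurable
  refine Measure.ext_of_Iio_of_isProbabilityMeasure _ _ fun a => ?_
  rw [Measure.map_apply (measurable_distribTransform μ) measurableSet_Iio,
    Measure.prod_apply (measurable_distribTransform μ measurableSet_Iio),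
    volume_restrict_Icc_zero_one_Iio]
  exact lintegral_volume_restrict_Icc_setOf_distribTransform_lt a

end ProbabilityTheory

/-- If `X` and `ξ` are independent `[0,1]`-valued random variables
with `ξ` uniform on `[0,1]`, then `U = ξ·F(X) + (1−ξ)·F⁻(X)` is uniformly
distributed on `[0,1]` and `|U − X| ≤ sup_{0≤t≤1} |F(t) − t|` (surely). -/
theorem stmt2
    {Ω : Type*} [MeasurableSpace Ω] (P : Measure Ω) [IsProbabilityMeasure P]
    (X ξ : Ω → ℝ) (hX : Measurable X) (hξ : Measurable ξ)
    (hXrange : ∀ ω, X ω ∈ Set.Icc (0:ℝ) 1) (hξrange : ∀ ω, ξ ω ∈ Set.Icc (0:ℝ) 1)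
    (hindep : IndepFun X ξ P)
    (hunif : Measure.map ξ P = volume.restrict (Set.Icc (0:ℝ) 1))
    (F Fm : ℝ → ℝ)
    (hF : ∀ x, F x = (P {ω | X ω ≤ x}).toReal)
    (hFm : ∀ x, Fm x = (P {ω | X ω < x}).toReal)
    (U : Ω → ℝ)
    (hU : ∀ ω, U ω = ξ ω * F (X ω) + (1 - ξ ω) * Fm (X ω)) :
    Measure.map U P = volume.restrict (Set.Icc (0:ℝ) 1) ∧
      ∀ ω, |U ω - X ω| ≤ ⨆ t : Set.Icc (0:ℝ) 1, |F t - (t : ℝ)| := by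
  set μ := P.map X
  have : IsProbabilityMeasure μ := Measure.isProbabilityMeasure_map hX.aemeasurable
  have hFcdf : F = cdf μ := funext fun x => by
    rw [hF, cdf_eq_real, map_measureReal_apply hX measurableSet_Iic]
    rfl
  have hFmleftLim : Fm = leftLim (cdf μ) := funext fun x => by
    rw [hFm, leftLim_cdf_eq_real, map_measureReal_apply hX measurableSet_Iio]
    rfl
  have hUT : U = distribTransform μ ∘ fun ω => (X ω, ξ ω) := funext fun ω => by
    rw [hU, hFcdf, hFmleftLim]
    rfl
  refine ⟨?_, fun ω => ?_⟩
  · have hlaw : P.map (fun ω => (X ω, ξ ω)) = μ.prod (volume.restrict (Icc (0 : ℝ) 1)) :=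
      hunif ▸ (indepFun_iff_map_prod_eq_prod_map_map hX.aemeasurable hξ.aemeasurable).1 hindep
    rw [hUT, ← Measure.map_map (measurable_distribTransform μ) (hX.prodMk hξ), hlaw,
      map_distribTransform_prod_volume_restrict_Icc]
  · rw [hUT, hFcdf]
    exact abs_distribTransform_sub_le μ (hXrange ω) (hξrange ω)
end

section
/- Let F : [0,1] → [0,1] be the distribution function of a [0,1]-valued random variable X, and let F⁻¹(x) = inf{t ∈ [0,1] : F(t) ≥ x} for 0 < x < 1 be its generalized inverse. Then sup_{0 < x < 1} |F⁻¹(x) − x| = sup_{0 < t < 1} |F(t) − t|. -/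
open MeasureTheory

private lemma aux_le_of_forall_eps {c B : ℝ} (h : ∀ ε > 0, c - ε ≤ B) : c ≤ B := by
  by_contra h'
  push_neg at h'
  have := h ((c - B) / 2) (by linarith)
  linarith

/-- For a distribution function `F` on `[0,1]` (nondecreasing,
right-continuous, `F(1) = 1`) with generalized inverse
`F⁻¹(x) = inf {t ∈ [0,1] : F(t) ≥ x}`, one has
`sup_{0<x<1} |F⁻¹(x) − x| = sup_{0<t<1} |F(t) − t|`. -/
theorem stmt4
    (F : ℝ → ℝ)
    (hmono : MonotoneOn F (Set.Icc 0 1))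
    (hrange : ∀ t ∈ Set.Icc (0:ℝ) 1, F t ∈ Set.Icc (0:ℝ) 1)
    (hrc : ∀ t ∈ Set.Ico (0:ℝ) 1, ContinuousWithinAt F (Set.Ici t) t)
    (hF1 : F 1 = 1)
    (Finv : ℝ → ℝ)
    (hFinv : ∀ x ∈ Set.Ioo (0:ℝ) 1, Finv x = sInf {t ∈ Set.Icc (0:ℝ) 1 | x ≤ F t}) :
    ⨆ x : Set.Ioo (0:ℝ) 1, |Finv x - (x : ℝ)| = ⨆ t : Set.Ioo (0:ℝ) 1, |F t - (t : ℝ)| := by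
  have hhalf : (1/2 : ℝ) ∈ Set.Ioo (0:ℝ) 1 := by norm_num
  have hne : Nonempty (Set.Ioo (0:ℝ) 1) := ⟨⟨1/2, hhalf⟩⟩
  set S : ℝ → Set ℝ := fun x => {t ∈ Set.Icc (0:ℝ) 1 | x ≤ F t} with hSdef
  have h1S : ∀ x ∈ Set.Ioo (0:ℝ) 1, (1:ℝ) ∈ S x := by
    intro x hx
    exact ⟨⟨by norm_num, le_refl 1⟩, by rw [hF1]; exact hx.2.le⟩
  have hSbdd : ∀ x, BddBelow (S x) := fun x => ⟨0, fun t ht => ht.1.1⟩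
  have hq0 : ∀ x ∈ Set.Ioo (0:ℝ) 1, 0 ≤ sInf (S x) :=
    fun x hx => le_csInf ⟨1, h1S x hx⟩ (fun t ht => ht.1.1)
  have hq1 : ∀ x ∈ Set.Ioo (0:ℝ) 1, sInf (S x) ≤ 1 :=
    fun x hx => csInf_le (hSbdd x) (h1S x hx)
  -- key: x ≤ F (sInf (S x)) by right-continuity
  have hqS : ∀ x ∈ Set.Ioo (0:ℝ) 1, x ≤ F (sInf (S x)) := by
    intro x hx
    by_contra h
    push_neg at h
    set q := sInf (S x) with hq
    have hq0' := hq0 x hx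
    have hq1' := hq1 x hx
    rw [← hq] at hq0' hq1'
    have hqlt : q < 1 := by
      rcases lt_or_eq_of_le hq1' with h' | h'
      · exact h'
      · rw [h', hF1] at h; exact absurd h (not_lt.mpr hx.2.le)
    have hev : ∀ᶠ s in nhdsWithin q (Set.Ici q), F s < x :=
      (hrc q ⟨hq0', hqlt⟩).eventually_lt_const h
    obtain ⟨ε, hε, hball⟩ := Metric.mem_nhdsWithin_iff.mp hev
    have hkey : q + ε ≤ q := by
      apply le_csInf ⟨1, h1S x hx⟩
      intro s hs
      by_contra hcon
      push_neg at hcon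
      have hqs : q ≤ s := csInf_le (hSbdd x) hs
      have hdist : dist s q < ε := by
        rw [Real.dist_eq, abs_of_nonneg (by linarith)]; linarith
      exact absurd hs.2 (not_le.mpr (hball ⟨Metric.mem_ball.mpr hdist, hqs⟩))
    linarith
  -- Finv x ∈ [0,1]
  have hF0 : ∀ t ∈ Set.Icc (0:ℝ) 1, (0:ℝ) ≤ F t := fun t ht => (hrange t ht).1
  have hFle1 : ∀ t ∈ Set.Icc (0:ℝ) 1, F t ≤ 1 := fun t ht => (hrange t ht).2
  -- boundedness of the two families
  have hBddB : BddAbove (Set.range fun t : Set.Ioo (0:ℝ) 1 => |F t - (t : ℝ)|) := by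
    refine ⟨1, ?_⟩
    rintro _ ⟨t, rfl⟩
    have h1 := hF0 t ⟨t.2.1.le, t.2.2.le⟩
    have h2 := hFle1 t ⟨t.2.1.le, t.2.2.le⟩
    have h3 := t.2.1
    have h4 := t.2.2
    rw [abs_le]; constructor <;> [linarith; linarith]
  have hBddA : BddAbove (Set.range fun x : Set.Ioo (0:ℝ) 1 => |Finv x - (x : ℝ)|) := by
    refine ⟨1, ?_⟩
    rintro _ ⟨x, rfl⟩
    show |Finv ↑x - ↑x| ≤ 1
    rw [hFinv x x.2]
    have h1 := hq0 x x.2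
    have h2 := hq1 x x.2
    have h3 := x.2.1
    have h4 := x.2.2
    rw [abs_le]; constructor <;> [linarith; linarith]
  set A : ℝ := ⨆ x : Set.Ioo (0:ℝ) 1, |Finv x - (x : ℝ)| with hA
  set B : ℝ := ⨆ t : Set.Ioo (0:ℝ) 1, |F t - (t : ℝ)| with hB
  have hAnn : 0 ≤ A :=
    le_trans (abs_nonneg _) (le_ciSup hBddA ⟨1/2, hhalf⟩)
  have hBnn : 0 ≤ B :=
    le_trans (abs_nonneg _) (le_ciSup hBddB ⟨1/2, hhalf⟩)
  have hBle : ∀ t : Set.Ioo (0:ℝ) 1, |F t - (t : ℝ)| ≤ B :=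
    fun t => le_ciSup hBddB t
  have hAle : ∀ x : Set.Ioo (0:ℝ) 1, |Finv x - (x : ℝ)| ≤ A :=
    fun x => le_ciSup hBddA x
  apply le_antisymm
  · -- A ≤ B
    apply ciSup_le
    rintro ⟨x, hx⟩
    simp only
    rw [hFinv x hx, abs_sub_le_iff]
    set q := sInf (S x) with hq
    have hq0' := hq0 x hx
    have hq1' := hq1 x hx
    rw [← hq] at hq0' hq1'
    constructor
    · -- q - x ≤ B
      rcases le_or_gt q x with hle | hlt
      · linarith
      · apply aux_le_of_forall_eps
        intro ε hε
        have hqpos : 0 < q := lt_trans hx.1 hlt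
        set t : ℝ := max (q - ε) (q / 2) with ht
        have ht0 : 0 < t := lt_of_lt_of_le (by linarith) (le_max_right _ _)
        have htq : t < q := max_lt (by linarith) (by linarith)
        have ht1 : t < 1 := lt_of_lt_of_le htq hq1'
        have htF : F t < x := by
          by_contra hcon
          push_neg at hcon
          have : q ≤ t := csInf_le (hSbdd x) ⟨⟨ht0.le, ht1.le⟩, hcon⟩
          linarith
        have hb := hBle ⟨t, ht0, ht1⟩
        simp only at hb
        have habs : -(F t - t) ≤ |F t - t| := neg_le_abs _
        have hge : t ≥ q - ε := le_max_left _ _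
        linarith
    · -- x - q ≤ B
      rcases le_or_gt x q with hle | hlt
      · linarith
      · have hFq : x ≤ F q := hqS x hx
        rcases eq_or_lt_of_le hq0' with h0 | h0
        · -- q = 0
          apply aux_le_of_forall_eps
          intro ε hε
          set t : ℝ := min ε (1/2) with ht
          have ht0 : 0 < t := lt_min hε (by norm_num)
          have ht1 : t < 1 := lt_of_le_of_lt (min_le_right _ _) (by norm_num)
          have hmon : F q ≤ F t := by
            rw [← h0]
            exact hmono ⟨le_refl 0, by norm_num⟩ ⟨ht0.le, ht1.le⟩ ht0.le
          have hb := hBle ⟨t, ht0, ht1⟩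
          simp only at hb
          have habs : F t - t ≤ |F t - t| := le_abs_self _
          have : t ≤ ε := min_le_left _ _
          linarith
        · -- 0 < q
          have hb := hBle ⟨q, h0, lt_trans hlt hx.2⟩
          simp only at hb
          have habs : F q - q ≤ |F q - q| := le_abs_self _
          linarith
  · -- B ≤ A
    apply ciSup_le
    rintro ⟨t, ht⟩
    simp only
    rw [abs_sub_le_iff]
    have htIcc : t ∈ Set.Icc (0:ℝ) 1 := ⟨ht.1.le, ht.2.le⟩
    have hFt0 : 0 ≤ F t := hF0 t htIcc
    have hFt1 : F t ≤ 1 := hFle1 t htIcc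
    constructor
    · -- F t - t ≤ A
      rcases le_or_gt (F t) t with hle | hlt
      · linarith
      · apply aux_le_of_forall_eps
        intro ε hε
        set x : ℝ := max (F t - ε) ((t + F t) / 2) with hxdef
        have hxt : t < x := lt_of_lt_of_le (by linarith) (le_max_right _ _)
        have hxF : x < F t := max_lt (by linarith) (by linarith)
        have hx0 : 0 < x := lt_trans ht.1 hxt
        have hx1 : x < 1 := lt_of_lt_of_le hxF hFt1
        have hxIoo : x ∈ Set.Ioo (0:ℝ) 1 := ⟨hx0, hx1⟩
        have hmem : t ∈ S x := ⟨htIcc, hxF.le⟩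
        have hqle : sInf (S x) ≤ t := csInf_le (hSbdd x) hmem
        have ha := hAle ⟨x, hxIoo⟩
        simp only at ha
        rw [hFinv x hxIoo] at ha
        have habs : -(sInf (S x) - x) ≤ |sInf (S x) - x| := neg_le_abs _
        have hge : F t - ε ≤ x := le_max_left _ _
        linarith
    · -- t - F t ≤ A
      rcases le_or_gt t (F t) with hle | hlt
      · linarith
      · apply aux_le_of_forall_eps
        intro ε hε
        set x : ℝ := min ((F t + t) / 2) (F t + ε) with hxdef
        have hxF : F t < x := lt_min (by linarith) (by linarith)
        have hxt : x < t := lt_of_le_of_lt (min_le_left _ _) (by linarith)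
        have hx0 : 0 < x := lt_of_le_of_lt hFt0 hxF
        have hx1 : x < 1 := lt_trans hxt ht.2
        have hxIoo : x ∈ Set.Ioo (0:ℝ) 1 := ⟨hx0, hx1⟩
        have hqge : t ≤ sInf (S x) := by
          apply le_csInf ⟨1, h1S x hxIoo⟩
          intro s hs
          by_contra hcon
          push_neg at hcon
          have : F s ≤ F t := hmono hs.1 htIcc hcon.le
          have := hs.2
          linarith
        have ha := hAle ⟨x, hxIoo⟩
        simp only at ha
        rw [hFinv x hxIoo] at ha
        have habs : sInf (S x) - x ≤ |sInf (S x) - x| := le_abs_self _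
        have hle' : x ≤ F t + ε := min_le_right _ _
        linarith
end

section
/- Let X and U be [0,1]-valued random variables with U uniformly distributed. Then the ∞-Wasserstein distance W_∞(X,U) equals the supremum of |E f(X) − E f(U)| over all functions f : [0,1] → ℝ of bounded variation with total variation V(f) ≤ 1. -/
/-!
Both sides equal the Kolmogorov distance `K = sup_x |F(x) - x|` between the distribution function
`F` of `X` and that of `U`.

If a coupling keeps `|X' - U'| ≤ r`, then `F(x) ≤ P(U' ≤ x + r) ≤ x + r` and symmetrically, so
`K ≤ r`; conversely the quantile coupling `(F⁻¹(U), U)` moves no point by more than `K`.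

Testing against the indicator of `(x, ∞)` gives `|F(x) - x|`. Conversely, a function of variation
`V` on `[0,1]` is a difference of two monotone functions whose increases add up to `V`, and by the
layer-cake formula the integral of a monotone function is an average of the masses of the upper
sets `{g > t}`. These are half-lines, on which the two laws differ by at most `K`.
-/

open MeasureTheory ProbabilityTheory Set Filter Function

theorem IsLowerSet.eq_Iio_or_eq_Iic {α : Type*} [ConditionallyCompleteLinearOrder α] {s : Set α}
    (hs : IsLowerSet s) (hne : s.Nonempty) (hbdd : BddAbove s) :
    s = Iio (sSup s) ∨ s = Iic (sSup s) := by
  by_cases hmem : sSup s ∈ s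
  · exact Or.inr <| Subset.antisymm (fun x hx => le_csSup hbdd hx) fun x hx => hs hx hmem
  · refine Or.inl <| Subset.antisymm (fun x hx => ?_) fun x hx => ?_
    · exact (le_csSup hbdd hx).lt_of_ne fun h => hmem (h ▸ hx)
    · obtain ⟨y, hy, hxy⟩ := exists_lt_of_lt_csSup hne hx
      exact hs hxy.le hy

theorem IsLowerSet.eq_univ_of_not_bddAbove {α : Type*} [LinearOrder α] {s : Set α}
    (hs : IsLowerSet s) (hbdd : ¬BddAbove s) : s = univ := by
  refine eq_univ_of_forall fun x => ?_
  obtain ⟨y, hy, hxy⟩ := not_bddAbove_iff.1 hbdd x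
  exact hs hxy.le hy

theorem MonotoneOn.exists_monotone_extension_Icc {α β : Type*} [LinearOrder α] [Preorder β]
    {f : α → β} {a b : α} (hab : a ≤ b) (hf : MonotoneOn f (Icc a b)) :
    ∃ g : α → β, Monotone g ∧ EqOn f g (Icc a b) ∧ ∀ x, g x ∈ Icc (f a) (f b) := by
  refine ⟨IccExtend hab fun x => f x, (monotoneOn_iff_monotone.1 hf).IccExtend hab,
    fun x hx => (IccExtend_of_mem hab (fun x : Icc a b => f x) hx).symm, fun x => ?_⟩
  obtain ⟨hax, hxb⟩ := (projIcc a b hab x).2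
  exact ⟨hf (left_mem_Icc.2 hab) (projIcc a b hab x).2 hax,
    hf (projIcc a b hab x).2 (right_mem_Icc.2 hab) hxb⟩

lemma measureReal_Iio_eq_leftLim_cdf (μ : Measure ℝ) [IsProbabilityMeasure μ] (x : ℝ) :
    μ.real (Iio x) = leftLim (cdf μ) x := by
  have h := (cdf μ).measure_Iio (tendsto_cdf_atBot μ) x
  rw [measure_cdf, sub_zero] at h
  rw [measureReal_def, h, ENNReal.toReal_ofReal
    ((cdf_nonneg μ (x - 1)).trans ((monotone_cdf μ).le_leftLim (sub_one_lt x)))]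

lemma cdf_eq_zero_of_ae_le {μ : Measure ℝ} [IsProbabilityMeasure μ] {a x : ℝ}
    (hμ : ∀ᵐ y ∂μ, a ≤ y) (hx : x < a) : cdf μ x = 0 := by
  rw [cdf_eq_real, measureReal_eq_zero_iff]
  exact measure_mono_null (fun y (hy : y ≤ x) (hay : a ≤ y) => (hay.trans hy).not_gt hx)
    (ae_iff.1 hμ)

lemma cdf_eq_one_of_ae_le {μ : Measure ℝ} [IsProbabilityMeasure μ] {b x : ℝ}
    (hμ : ∀ᵐ y ∂μ, y ≤ b) (hx : b ≤ x) : cdf μ x = 1 := by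
  rw [cdf_eq_real, measureReal_def, (prob_compl_eq_zero_iff measurableSet_Iic).1,
    ENNReal.toReal_one]
  exact measure_mono_null (fun y (hy : ¬y ≤ x) (hyb : y ≤ b) => hy (hyb.trans hx)) (ae_iff.1 hμ)

lemma integral_eq_setIntegral_Ioc_measureReal_lt {α : Type*} [MeasurableSpace α] (ρ : Measure α)
    [IsFiniteMeasure ρ] {h : α → ℝ} (hm : AEStronglyMeasurable h ρ) {c : ℝ} (h0 : ∀ x, 0 ≤ h x)
    (hc : ∀ x, h x ≤ c) :
    ∫ x, h x ∂ρ = ∫ t in Ioc 0 c, ρ.real {x | t < h x} := by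
  have hint : Integrable h ρ := Integrable.of_bound hm c
    (ae_of_all _ fun x => (Real.norm_of_nonneg (h0 x)).trans_le (hc x))
  rw [hint.integral_eq_integral_meas_lt (ae_of_all _ h0)]
  refine setIntegral_eq_of_subset_of_forall_sdiff_eq_zero measurableSet_Ioi Ioc_subset_Ioi_self
    fun t ht => ?_
  have hct : c < t := lt_of_not_ge fun h => ht.2 ⟨ht.1, h⟩
  have hempty : {x | t < h x} = ∅ :=
    eq_empty_of_forall_notMem fun x hx => (hc x).not_gt (hct.trans hx)
  rw [hempty, measureReal_empty]

lemma volume_Ioo_inter_Iic {a b c : ℝ} (hc : c ∈ Icc a b) :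
    volume (Ioo a b ∩ Iic c) = ENNReal.ofReal (c - a) := by
  refine le_antisymm ?_ ?_
  · calc volume (Ioo a b ∩ Iic c) ≤ volume (Icc a c) :=
          measure_mono fun y hy => ⟨hy.1.1.le, hy.2⟩
      _ = ENNReal.ofReal (c - a) := Real.volume_Icc
  · calc ENNReal.ofReal (c - a) = volume (Ioo a c) := Real.volume_Ioo.symm
      _ ≤ volume (Ioo a b ∩ Iic c) :=
          measure_mono fun y hy => ⟨⟨hy.1, hy.2.trans_le hc.2⟩, hy.2.le⟩

instance : IsProbabilityMeasure (volume.restrict (Icc (0 : ℝ) 1)) :=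
  ⟨by rw [Measure.restrict_apply_univ, Real.volume_Icc, sub_zero, ENNReal.ofReal_one]⟩

lemma cdf_volume_restrict_Icc_zero_one (x : ℝ) :
    cdf (volume.restrict (Icc (0 : ℝ) 1)) x = projIcc 0 1 zero_le_one x := by
  rw [coe_projIcc, cdf_eq_real, measureReal_restrict_apply measurableSet_Iic, inter_comm,
    ← Ici_inter_Iic, inter_assoc, Iic_inter_Iic, Ici_inter_Iic, Real.volume_real_Icc, sub_zero,
    max_comm]

lemma lipschitzWith_cdf_volume_restrict_Icc_zero_one :
    LipschitzWith 1 (cdf (volume.restrict (Icc (0 : ℝ) 1))) := by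
  rw [show ⇑(cdf (volume.restrict (Icc (0 : ℝ) 1))) = Subtype.val ∘ projIcc 0 1 zero_le_one from
    funext cdf_volume_restrict_Icc_zero_one]
  simpa using (LipschitzWith.subtype_val _).comp (LipschitzWith.projIcc zero_le_one)

noncomputable def kolmogorovDist (μ ν : Measure ℝ) : ℝ := ⨆ x, |cdf μ x - cdf ν x|

section KolmogorovDist

variable {μ ν : Measure ℝ}

lemma abs_cdf_sub_cdf_le_kolmogorovDist (x : ℝ) : |cdf μ x - cdf ν x| ≤ kolmogorovDist μ ν := by
  refine le_ciSup (f := fun x => |cdf μ x - cdf ν x|) ⟨1, ?_⟩ x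
  rintro _ ⟨y, rfl⟩
  exact abs_sub_le_iff.2 ⟨by linarith [cdf_le_one μ y, cdf_nonneg ν y],
    by linarith [cdf_le_one ν y, cdf_nonneg μ y]⟩

lemma kolmogorovDist_nonneg : 0 ≤ kolmogorovDist μ ν :=
  (abs_nonneg _).trans (abs_cdf_sub_cdf_le_kolmogorovDist 0)

lemma abs_leftLim_cdf_sub_leftLim_cdf_le_kolmogorovDist (x : ℝ) :
    |leftLim (cdf μ) x - leftLim (cdf ν) x| ≤ kolmogorovDist μ ν :=
  le_of_tendsto
    (((monotone_cdf μ).tendsto_leftLim x).sub ((monotone_cdf ν).tendsto_leftLim x)).abs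
    (Eventually.of_forall abs_cdf_sub_cdf_le_kolmogorovDist)

variable [IsProbabilityMeasure μ] [IsProbabilityMeasure ν]

lemma abs_measureReal_sub_le_kolmogorovDist_of_isLowerSet {s : Set ℝ} (hs : IsLowerSet s) :
    |μ.real s - ν.real s| ≤ kolmogorovDist μ ν := by
  rcases s.eq_empty_or_nonempty with rfl | hne
  · simpa using kolmogorovDist_nonneg
  by_cases hbdd : BddAbove s
  · rcases hs.eq_Iio_or_eq_Iic hne hbdd with h | h <;> rw [h]
    · simpa only [measureReal_Iio_eq_leftLim_cdf] using
        abs_leftLim_cdf_sub_leftLim_cdf_le_kolmogorovDist _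
    · rw [← cdf_eq_real, ← cdf_eq_real]
      exact abs_cdf_sub_cdf_le_kolmogorovDist _
  · simpa [hs.eq_univ_of_not_bddAbove hbdd] using kolmogorovDist_nonneg

lemma abs_measureReal_sub_le_kolmogorovDist_of_isUpperSet {s : Set ℝ} (hs : IsUpperSet s)
    (hsm : MeasurableSet s) : |μ.real s - ν.real s| ≤ kolmogorovDist μ ν := by
  have := abs_measureReal_sub_le_kolmogorovDist_of_isLowerSet (μ := μ) (ν := ν) hs.compl
  rwa [probReal_compl_eq_one_sub hsm, probReal_compl_eq_one_sub hsm, sub_sub_sub_cancel_left,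
    abs_sub_comm] at this

lemma abs_integral_sub_le_kolmogorovDist_of_monotone {g : ℝ → ℝ} (hg : Monotone g) {m M : ℝ}
    (hgI : ∀ x, g x ∈ Icc m M) :
    |∫ x, g x ∂μ - ∫ x, g x ∂ν| ≤ (M - m) * kolmogorovDist μ ν := by
  have hgm : Measurable g := hg.measurable
  have layer (ρ : Measure ℝ) [IsProbabilityMeasure ρ] :
      ∫ x, g x ∂ρ = (∫ t in Ioc 0 (M - m), ρ.real {x | t < g x - m}) + m := by
    have hint : Integrable g ρ := .of_mem_Icc m M hgm.aemeasurable (ae_of_all _ hgI)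
    calc ∫ x, g x ∂ρ = ∫ x, (g x - m) ∂ρ + m := by
          rw [integral_sub hint (integrable_const m), integral_const, probReal_univ, one_smul,
            sub_add_cancel]
      _ = _ := by
          rw [integral_eq_setIntegral_Ioc_measureReal_lt ρ (hgm.sub_const m).aestronglyMeasurable
            (fun x => sub_nonneg.2 (hgI x).1) (fun x => sub_le_sub_right (hgI x).2 m)]
  have integrableOn (ρ : Measure ℝ) [IsFiniteMeasure ρ] :
      IntegrableOn (fun t => ρ.real {x | t < g x - m}) (Ioc 0 (M - m)) :=
    have hanti : Antitone fun t => ρ.real {x | t < g x - m} := fun s t hst =>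
      measureReal_mono fun x (hx : t < g x - m) => hst.trans_lt hx
    hanti.intervalIntegrable.1
  rw [layer μ, layer ν, add_sub_add_right_eq_sub, ← integral_sub (integrableOn μ) (integrableOn ν),
    ← Real.norm_eq_abs]
  refine (norm_setIntegral_le_of_norm_le_const (C := kolmogorovDist μ ν) measure_Ioc_lt_top
    fun t _ => ?_).trans_eq ?_
  · exact abs_measureReal_sub_le_kolmogorovDist_of_isUpperSet
      (fun x y hxy hx => hx.trans_le (sub_le_sub_right (hg hxy) m))
      (measurableSet_lt measurable_const (hgm.sub_const m))
  · rw [Real.volume_real_Ioc_of_le (sub_nonneg.2 ((hgI 0).1.trans (hgI 0).2)), sub_zero, mul_comm]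

lemma abs_integral_sub_le_eVariationOn_mul_kolmogorovDist {f : ℝ → ℝ} {a b : ℝ} (hab : a ≤ b)
    (hf : BoundedVariationOn f (Icc a b)) (hμ : ∀ᵐ x ∂μ, x ∈ Icc a b)
    (hν : ∀ᵐ x ∂ν, x ∈ Icc a b) :
    |∫ x, f x ∂μ - ∫ x, f x ∂ν| ≤ (eVariationOn f (Icc a b)).toReal * kolmogorovDist μ ν := by
  obtain ⟨p, q, hp, hq, rfl, hpq⟩ := hf.locallyBoundedVariationOn.exists_monotoneOn_sub_monotoneOn'
  obtain ⟨p', hp'm, hpp', hp'I⟩ := hp.exists_monotone_extension_Icc hab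
  obtain ⟨q', hq'm, hqq', hq'I⟩ := hq.exists_monotone_extension_Icc hab
  have hvar : (eVariationOn (p - q) (Icc a b)).toReal = (p b - p a) + (q b - q a) := by
    rw [hpq a (left_mem_Icc.2 hab) b (right_mem_Icc.2 hab), variationOnFromTo.eq_of_le _ _ hab,
      inter_self]
  have split (ρ : Measure ℝ) [IsProbabilityMeasure ρ] (hρ : ∀ᵐ x ∂ρ, x ∈ Icc a b) :
      ∫ x, (p - q) x ∂ρ = ∫ x, p' x ∂ρ - ∫ x, q' x ∂ρ := by
    rw [← integral_sub (.of_mem_Icc _ _ hp'm.measurable.aemeasurable (ae_of_all _ hp'I))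
      (.of_mem_Icc _ _ hq'm.measurable.aemeasurable (ae_of_all _ hq'I))]
    exact integral_congr_ae (hρ.mono fun x hx => by simp only [Pi.sub_apply, hpp' hx, hqq' hx])
  have hP := abs_integral_sub_le_kolmogorovDist_of_monotone (μ := μ) (ν := ν) hp'm hp'I
  have hQ := abs_integral_sub_le_kolmogorovDist_of_monotone (μ := μ) (ν := ν) hq'm hq'I
  rw [split μ hμ, split ν hν, hvar, add_mul]
  calc _ = |(∫ x, p' x ∂μ - ∫ x, p' x ∂ν) - (∫ x, q' x ∂μ - ∫ x, q' x ∂ν)| := by ring_nf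
    _ ≤ _ := (abs_sub _ _).trans (add_le_add hP hQ)

end KolmogorovDist

lemma cdf_map_le_cdf_map_add {Ω : Type*} [MeasurableSpace Ω] (P : Measure Ω)
    [IsProbabilityMeasure P] {X Y : Ω → ℝ} (hX : Measurable X) (hY : Measurable Y) {r : ℝ}
    (h : ∀ᵐ ω ∂P, Y ω ≤ X ω + r) (x : ℝ) : cdf (P.map X) x ≤ cdf (P.map Y) (x + r) := by
  have : IsProbabilityMeasure (P.map X) := Measure.isProbabilityMeasure_map hX.aemeasurable
  have : IsProbabilityMeasure (P.map Y) := Measure.isProbabilityMeasure_map hY.aemeasurable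
  rw [cdf_eq_real, cdf_eq_real, map_measureReal_apply hX measurableSet_Iic,
    map_measureReal_apply hY measurableSet_Iic, measureReal_def, measureReal_def]
  refine ENNReal.toReal_mono (measure_ne_top _ _) (measure_mono_ae (h.mono fun ω hω hx => ?_))
  exact (show Y ω ≤ x + r by linarith [show X ω ≤ x from hx])

lemma kolmogorovDist_le_of_coupling {π : Measure (ℝ × ℝ)} [IsProbabilityMeasure π]
    (hν : LipschitzWith 1 (cdf (π.map Prod.snd))) {r : ℝ} (h : ∀ᵐ p ∂π, |p.1 - p.2| ≤ r) :
    kolmogorovDist (π.map Prod.fst) (π.map Prod.snd) ≤ r := by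
  obtain ⟨p, hp⟩ := h.exists
  have hr : 0 ≤ r := (abs_nonneg _).trans hp
  have hlip (x : ℝ) : cdf (π.map Prod.snd) (x + r) ≤ cdf (π.map Prod.snd) x + r := by
    have := hν.dist_le_mul (x + r) x
    rw [Real.dist_eq, Real.dist_eq, add_sub_cancel_left, abs_of_nonneg hr, NNReal.coe_one,
      one_mul] at this
    linarith [le_abs_self (cdf (π.map Prod.snd) (x + r) - cdf (π.map Prod.snd) x)]
  refine ciSup_le fun x => abs_sub_le_iff.2 ⟨?_, ?_⟩
  · have := cdf_map_le_cdf_map_add π measurable_fst measurable_snd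
      (h.mono fun p hp => by linarith [abs_le.1 hp]) x
    linarith [hlip x]
  · have := cdf_map_le_cdf_map_add π measurable_snd measurable_fst
      (h.mono fun p hp => by linarith [abs_le.1 hp]) (x - r)
    have hlip' := hlip (x - r)
    rw [sub_add_cancel] at this hlip'
    linarith

-- Only meaningful for `0 < u < 1`: otherwise the set may be empty or unbounded below.
noncomputable def quantile (μ : Measure ℝ) (u : ℝ) : ℝ := sInf {x | u ≤ cdf μ x}

section Quantile

variable {μ : Measure ℝ} {u : ℝ}

lemma bddBelow_setOf_le_cdf (hu : 0 < u) : BddBelow {x | u ≤ cdf μ x} := by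
  obtain ⟨b, hb⟩ := eventually_atBot.1 ((tendsto_cdf_atBot μ).eventually (gt_mem_nhds hu))
  exact ⟨b, fun x hx => le_of_not_ge fun hxb => (hb x hxb).not_ge hx⟩

lemma nonempty_setOf_le_cdf (hu : u < 1) : {x | u ≤ cdf μ x}.Nonempty :=
  ((tendsto_cdf_atTop μ).eventually (lt_mem_nhds hu)).exists.imp fun _ => le_of_lt

lemma le_cdf_quantile (hu : u < 1) : u ≤ cdf μ (quantile μ u) := by
  have hcont : ContinuousWithinAt (cdf μ) (Ioi (quantile μ u)) (quantile μ u) :=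
    ((cdf μ).right_continuous _).mono Ioi_subset_Ici_self
  refine ge_of_tendsto hcont.tendsto (eventually_nhdsWithin_of_forall fun y hy => ?_)
  obtain ⟨x, hx, hxy⟩ := exists_lt_of_csInf_lt (nonempty_setOf_le_cdf hu) hy
  exact hx.trans (monotone_cdf μ hxy.le)

lemma quantile_le_iff (hu : u ∈ Ioo 0 1) {x : ℝ} : quantile μ u ≤ x ↔ u ≤ cdf μ x :=
  ⟨fun h => (le_cdf_quantile hu.2).trans (monotone_cdf μ h),
    fun h => csInf_le (bddBelow_setOf_le_cdf hu.1) h⟩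

lemma monotoneOn_quantile : MonotoneOn (quantile μ) (Ioo 0 1) := fun _ hu _ hv huv =>
  (quantile_le_iff hu).2 (huv.trans (le_cdf_quantile hv.2))

lemma aemeasurable_quantile :
    AEMeasurable (quantile μ) (volume.restrict (Icc (0 : ℝ) 1)) := by
  rw [← Measure.restrict_congr_set Ioo_ae_eq_Icc]
  exact aemeasurable_restrict_of_monotoneOn measurableSet_Ioo monotoneOn_quantile

lemma map_quantile_volume_restrict_Icc [IsProbabilityMeasure μ] :
    (volume.restrict (Icc (0 : ℝ) 1)).map (quantile μ) = μ := by
  have hmeas := aemeasurable_quantile (μ := μ)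
  rw [← Measure.restrict_congr_set Ioo_ae_eq_Icc] at hmeas ⊢
  have : IsProbabilityMeasure (volume.restrict (Ioo (0 : ℝ) 1)) := by
    rw [Measure.restrict_congr_set Ioo_ae_eq_Icc]; infer_instance
  have : IsProbabilityMeasure ((volume.restrict (Ioo (0 : ℝ) 1)).map (quantile μ)) :=
    Measure.isProbabilityMeasure_map hmeas
  refine Measure.ext_of_Iic _ _ fun x => ?_
  have hpre : quantile μ ⁻¹' Iic x ∩ Ioo 0 1 = Ioo 0 1 ∩ Iic (cdf μ x) := by
    ext u
    simp only [mem_inter_iff, mem_preimage, mem_Iic]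
    exact ⟨fun ⟨h, hu⟩ => ⟨hu, (quantile_le_iff hu).1 h⟩,
      fun ⟨hu, h⟩ => ⟨(quantile_le_iff hu).2 h, hu⟩⟩
  rw [Measure.map_apply_of_aemeasurable hmeas measurableSet_Iic,
    Measure.restrict_apply' measurableSet_Ioo, hpre,
    volume_Ioo_inter_Iic ⟨cdf_nonneg μ x, cdf_le_one μ x⟩, sub_zero, ofReal_cdf]

end Quantile

lemma abs_quantile_sub_le_kolmogorovDist {μ : Measure ℝ} [IsProbabilityMeasure μ]
    (hμ : ∀ᵐ x ∂μ, x ∈ Icc 0 1) {u : ℝ} (hu : u ∈ Ioo 0 1) :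
    |quantile μ u - u| ≤ kolmogorovDist μ (volume.restrict (Icc 0 1)) := by
  set K := kolmogorovDist μ (volume.restrict (Icc (0 : ℝ) 1))
  have hK : 0 ≤ K := kolmogorovDist_nonneg
  have hF (x : ℝ) : |cdf μ x - projIcc 0 1 zero_le_one x| ≤ K := by
    rw [← cdf_volume_restrict_Icc_zero_one]
    exact abs_cdf_sub_cdf_le_kolmogorovDist x
  refine abs_sub_le_iff.2 ⟨sub_le_iff_le_add'.2 ((quantile_le_iff hu).2 ?_), ?_⟩
  · rcases le_or_gt 1 (u + K) with h | h
    · rw [cdf_eq_one_of_ae_le (hμ.mono fun x hx => hx.2) h]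
      exact hu.2.le
    · have hproj : (projIcc 0 1 zero_le_one (u + K) : ℝ) = u + K :=
        congrArg Subtype.val (projIcc_of_mem _ ⟨by linarith [hu.1], h.le⟩)
      linarith [abs_le.1 (hF (u + K)), hproj]
  · have hle := le_cdf_quantile (μ := μ) hu.2
    rcases lt_or_ge (quantile μ u) 0 with h0 | h0
    · rw [cdf_eq_zero_of_ae_le (hμ.mono fun x hx => hx.1) h0] at hle
      linarith [hu.1]
    · have hproj : (projIcc 0 1 zero_le_one (quantile μ u) : ℝ) ≤ quantile μ u :=
        max_le h0 (min_le_right _ _)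
      linarith [abs_le.1 (hF (quantile μ u))]

lemma exists_coupling_abs_sub_le_kolmogorovDist {μ : Measure ℝ} [IsProbabilityMeasure μ]
    (hμ : ∀ᵐ x ∂μ, x ∈ Icc 0 1) :
    ∃ π : Measure (ℝ × ℝ), IsProbabilityMeasure π ∧ π.map Prod.fst = μ ∧
      π.map Prod.snd = volume.restrict (Icc 0 1) ∧
      ∀ᵐ p ∂π, |p.1 - p.2| ≤ kolmogorovDist μ (volume.restrict (Icc 0 1)) := by
  have hT : AEMeasurable (fun u => (quantile μ u, u)) (volume.restrict (Icc (0 : ℝ) 1)) :=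
    aemeasurable_quantile.prodMk aemeasurable_id
  have hIoo : ∀ᵐ u ∂volume.restrict (Icc (0 : ℝ) 1), u ∈ Ioo 0 1 := by
    rw [← Measure.restrict_congr_set Ioo_ae_eq_Icc]
    exact ae_restrict_mem measurableSet_Ioo
  refine ⟨_, Measure.isProbabilityMeasure_map hT, ?_, ?_, ?_⟩
  · rw [AEMeasurable.map_map_of_aemeasurable measurable_fst.aemeasurable hT]
    exact map_quantile_volume_restrict_Icc
  · rw [AEMeasurable.map_map_of_aemeasurable measurable_snd.aemeasurable hT]
    exact Measure.map_id
  · rw [ae_map_iff hT (measurableSet_le (by fun_prop) measurable_const)]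
    exact hIoo.mono fun u hu => abs_quantile_sub_le_kolmogorovDist hμ hu

lemma monotone_indicator_Ioi_one (x : ℝ) : Monotone ((Ioi x).indicator (1 : ℝ → ℝ)) := by
  intro y z hyz
  simp only [indicator_apply, mem_Ioi, Pi.one_apply]
  split_ifs with hy hz
  exacts [le_rfl, absurd (hy.trans_le hyz) hz, zero_le_one, le_rfl]

lemma eVariationOn_indicator_Ioi_one_le (x : ℝ) {a b : ℝ} (hab : a ≤ b) :
    eVariationOn ((Ioi x).indicator (1 : ℝ → ℝ)) (Icc a b) ≤ 1 := by
  have := ((monotone_indicator_Ioi_one x).monotoneOn (Icc a b)).eVariationOn_eq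
    (left_mem_Icc.2 hab) (right_mem_Icc.2 hab)
  rw [inter_self] at this
  rw [this, ENNReal.ofReal_le_one]
  simp only [indicator_apply, mem_Ioi, Pi.one_apply]
  split_ifs <;> norm_num

lemma integral_indicator_Ioi_one (μ : Measure ℝ) [IsProbabilityMeasure μ] (x : ℝ) :
    ∫ y, (Ioi x).indicator 1 y ∂μ = 1 - cdf μ x := by
  rw [integral_indicator_one measurableSet_Ioi, ← compl_Iic,
    probReal_compl_eq_one_sub measurableSet_Iic, cdf_eq_real]

-- `W_∞(μ, ν)` is the infimum of this set.
noncomputable def couplingRadii (μ ν : Measure ℝ) : Set ℝ :=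
  {r | 0 ≤ r ∧ ∃ π : Measure (ℝ × ℝ), IsProbabilityMeasure π ∧
    π.map Prod.fst = μ ∧ π.map Prod.snd = ν ∧ ∀ᵐ p ∂π, |p.1 - p.2| ≤ r}

lemma sInf_couplingRadii_volume_restrict_Icc {μ : Measure ℝ} [IsProbabilityMeasure μ]
    (hμ : ∀ᵐ x ∂μ, x ∈ Icc 0 1) :
    sInf (couplingRadii μ (volume.restrict (Icc 0 1))) =
      kolmogorovDist μ (volume.restrict (Icc 0 1)) := by
  refine IsLeast.csInf_eq
    ⟨⟨kolmogorovDist_nonneg, exists_coupling_abs_sub_le_kolmogorovDist hμ⟩, fun r hr => ?_⟩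
  obtain ⟨-, π, _, hfst, hsnd, h⟩ := hr
  have := kolmogorovDist_le_of_coupling (hsnd ▸ lipschitzWith_cdf_volume_restrict_Icc_zero_one) h
  rwa [hfst, hsnd] at this

lemma sSup_abs_integral_comp_sub_eq_kolmogorovDist {Ω : Type*} [MeasurableSpace Ω]
    {P : Measure Ω} [IsProbabilityMeasure P] {X Y : Ω → ℝ} (hX : Measurable X) (hY : Measurable Y)
    (hXI : ∀ᵐ x ∂P.map X, x ∈ Icc 0 1) (hYI : ∀ᵐ x ∂P.map Y, x ∈ Icc 0 1) :
    sSup {d : ℝ | ∃ f : ℝ → ℝ, Measurable f ∧ eVariationOn f (Icc 0 1) ≤ 1 ∧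
        d = |(∫ ω, f (X ω) ∂P) - ∫ ω, f (Y ω) ∂P|} = kolmogorovDist (P.map X) (P.map Y) := by
  have : IsProbabilityMeasure (P.map X) := Measure.isProbabilityMeasure_map hX.aemeasurable
  have : IsProbabilityMeasure (P.map Y) := Measure.isProbabilityMeasure_map hY.aemeasurable
  have hlaw {f : ℝ → ℝ} (hf : Measurable f) :
      ∫ ω, f (X ω) ∂P - ∫ ω, f (Y ω) ∂P = ∫ x, f x ∂P.map X - ∫ x, f x ∂P.map Y := by
    rw [integral_map hX.aemeasurable hf.aestronglyMeasurable,
      integral_map hY.aemeasurable hf.aestronglyMeasurable]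
  have hmem (x : ℝ) : ∃ f : ℝ → ℝ, Measurable f ∧ eVariationOn f (Icc 0 1) ≤ 1 ∧
      |cdf (P.map X) x - cdf (P.map Y) x| = |(∫ ω, f (X ω) ∂P) - ∫ ω, f (Y ω) ∂P| := by
    refine ⟨_, measurable_one.indicator measurableSet_Ioi,
      eVariationOn_indicator_Ioi_one_le x zero_le_one, ?_⟩
    rw [hlaw (measurable_one.indicator measurableSet_Ioi), integral_indicator_Ioi_one,
      integral_indicator_Ioi_one, sub_sub_sub_cancel_left, abs_sub_comm]
  refine IsLUB.csSup_eq ⟨?_, fun b hb => ciSup_le fun x => hb (hmem x)⟩ ⟨_, hmem 0⟩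
  rintro _ ⟨f, hf, hV, rfl⟩
  rw [hlaw hf]
  refine (abs_integral_sub_le_eVariationOn_mul_kolmogorovDist zero_le_one
    (ne_top_of_le_ne_top ENNReal.one_ne_top hV) hXI hYI).trans ?_
  exact mul_le_of_le_one_left kolmogorovDist_nonneg
    (ENNReal.toReal_le_of_le_ofReal zero_le_one (by rwa [ENNReal.ofReal_one]))

/-- For a `[0,1]`-valued random variable `X` and `U` uniform on
`[0,1]`, the `∞`-Wasserstein distance `W_∞(X,U)` (infimum over couplings of the
essential supremum of the distance) equals the supremum of `|E f(X) − E f(U)|`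
over measurable functions `f` of total variation at most `1` on `[0,1]`. -/
theorem stmt5
    {Ω : Type*} [MeasurableSpace Ω] (P : Measure Ω) [IsProbabilityMeasure P]
    (X U : Ω → ℝ) (hX : Measurable X) (hU : Measurable U)
    (hXrange : ∀ ω, X ω ∈ Set.Icc (0:ℝ) 1)
    (hunif : Measure.map U P = volume.restrict (Set.Icc (0:ℝ) 1)) :
    sInf {r : ℝ | 0 ≤ r ∧ ∃ π : Measure (ℝ × ℝ), IsProbabilityMeasure π ∧
        π.map Prod.fst = P.map X ∧ π.map Prod.snd = P.map U ∧
        ∀ᵐ p ∂π, |p.1 - p.2| ≤ r} =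
      sSup {d : ℝ | ∃ f : ℝ → ℝ, Measurable f ∧
        eVariationOn f (Set.Icc 0 1) ≤ 1 ∧
        d = |(∫ ω, f (X ω) ∂P) - ∫ ω, f (U ω) ∂P|} := by
  have : IsProbabilityMeasure (P.map X) := Measure.isProbabilityMeasure_map hX.aemeasurable
  have hXI : ∀ᵐ x ∂P.map X, x ∈ Icc 0 1 :=
    (ae_map_iff hX.aemeasurable measurableSet_Icc).2 (ae_of_all _ hXrange)
  have hUI : ∀ᵐ x ∂P.map U, x ∈ Icc 0 1 := hunif ▸ ae_restrict_mem measurableSet_Icc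
  rw [sSup_abs_integral_comp_sub_eq_kolmogorovDist hX hU hXI hUI, hunif]
  exact sInf_couplingRadii_volume_restrict_Icc hXI
end

section
/- Let f, g : ℝ → ℝ be 1-periodic functions of bounded variation on [0,1], and define G(x) = ∫₀¹ f(u) g(u + x) du. Then G is of bounded variation on [0,1] with total variation V(G) ≤ V(g) · ‖f‖_{L¹([0,1])}. -/
/-!
Subtracting the integrals, `|G x - G y| ≤ ∫₀¹ |f t| |g (t + x) - g (t + y)| dt`. Summing over
a partition of `[0,1]` and exchanging sum and integral bounds each variation sum of `G` by
`∫₀¹ |f t| V(g, [t, t + 1]) dt`, and by periodicity `V(g, [t, t + 1]) = V(g, [0, 1])`.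
-/

open MeasureTheory Set

section Translation

variable {α E : Type*} [AddCommGroup α] [LinearOrder α] [IsOrderedAddMonoid α]
  [PseudoEMetricSpace E]

theorem eVariationOn_comp_const_add_Icc (g : α → E) (t a b : α) :
    eVariationOn (fun x => g (t + x)) (Icc a b) = eVariationOn g (Icc (t + a) (t + b)) := by
  rw [← image_const_add_Icc]
  exact eVariationOn.comp_eq_of_monotoneOn g (t + ·) fun x _ y _ hxy => add_le_add_right hxy t

theorem Function.Periodic.eVariationOn_Icc_add_period {g : α → E} {c t : α}
    (hg : Function.Periodic g c) (ht : t ∈ Icc 0 c) :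
    eVariationOn g (Icc t (t + c)) = eVariationOn g (Icc 0 c) := by
  have hshift : eVariationOn g (Icc c (c + t)) = eVariationOn g (Icc 0 t) := by
    have hgc : (fun x => g (c + x)) = g := funext fun x => by rw [add_comm, hg]
    simpa [hgc] using (eVariationOn_comp_const_add_Icc g c 0 t).symm
  have hsplit := eVariationOn.Icc_add_Icc g (s := univ) ht.2
    (le_add_of_nonneg_left ht.1) (mem_univ c)
  have hsplit₀ := eVariationOn.Icc_add_Icc g (s := univ) ht.1 ht.2 (mem_univ t)
  simp only [univ_inter] at hsplit hsplit₀
  rw [← hsplit, add_comm t c, hshift, ← hsplit₀, add_comm]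

theorem Function.Periodic.eVariationOn_comp_const_add {g : α → E} {c t : α}
    (hg : Function.Periodic g c) (ht : t ∈ Icc 0 c) :
    eVariationOn (fun x => g (t + x)) (Icc 0 c) = eVariationOn g (Icc 0 c) := by
  rw [eVariationOn_comp_const_add_Icc, add_zero, hg.eVariationOn_Icc_add_period ht]

end Translation

theorem eVariationOn_const_mul_le {α : Type*} [LinearOrder α] (c : ℝ) (h : α → ℝ)
    (s : Set α) :
    eVariationOn (fun x => c * h x) s ≤ ‖c‖ₑ * eVariationOn h s := by
  have hconst : eVariationOn (fun _ => c) s = 0 :=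
    eVariationOn.constant_on (subsingleton_singleton.anti (image_subset_iff.2 fun _ _ => rfl))
  simpa [hconst] using
    eVariationOn_fun_mul_le (f := fun _ => c) (g := h) (C := ‖c‖ₑ) (D := ⊤) (s := s)
      (fun _ _ => le_rfl) (fun _ _ => le_top)

theorem BoundedVariationOn.integrableOn {α E : Type*} [LinearOrder α] [MeasurableSpace α]
    [NormedAddCommGroup E] {μ : Measure α} {f : α → E} {s : Set α}
    (hsm : MeasurableSet s) (hs : μ s < ⊤)
    (hm : AEStronglyMeasurable f (μ.restrict s)) (hf : BoundedVariationOn f s) :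
    IntegrableOn f s μ := by
  rcases s.eq_empty_or_nonempty with rfl | ⟨a, ha⟩
  · exact integrableOn_empty
  refine IntegrableOn.of_bound hs hm (‖f a‖ + (eVariationOn f s).toReal) ?_
  filter_upwards [ae_restrict_mem hsm] with x hx
  calc ‖f x‖ ≤ ‖f a‖ + ‖f x - f a‖ := norm_le_norm_add_norm_sub' (f x) (f a)
    _ ≤ ‖f a‖ + (eVariationOn f s).toReal := by
        rw [← dist_eq_norm]
        exact add_le_add_right (hf.dist_le hx ha) _

theorem eVariationOn_integral_le {X α E : Type*} [MeasurableSpace X] [LinearOrder α]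
    [NormedAddCommGroup E] [NormedSpace ℝ E] {μ : Measure X} {F : X → α → E} {s : Set α}
    (hF : ∀ x ∈ s, Integrable (fun t => F t x) μ) :
    eVariationOn (fun x => ∫ t, F t x ∂μ) s ≤ ∫⁻ t, eVariationOn (F t) s ∂μ := by
  refine iSup_le fun ⟨n, u, hu, us⟩ => ?_
  have hpair : ∀ i, edist (∫ t, F t (u (i + 1)) ∂μ) (∫ t, F t (u i) ∂μ)
      ≤ ∫⁻ t, edist (F t (u (i + 1))) (F t (u i)) ∂μ := fun i => by
    simp only [edist_eq_enorm_sub]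
    rw [← integral_sub (hF _ (us _)) (hF _ (us _))]
    exact enorm_integral_le_lintegral_enorm _
  calc ∑ i ∈ Finset.range n, edist (∫ t, F t (u (i + 1)) ∂μ) (∫ t, F t (u i) ∂μ)
      ≤ ∑ i ∈ Finset.range n, ∫⁻ t, edist (F t (u (i + 1))) (F t (u i)) ∂μ :=
        Finset.sum_le_sum fun i _ => hpair i
    _ = ∫⁻ t, ∑ i ∈ Finset.range n, edist (F t (u (i + 1))) (F t (u i)) ∂μ := by
        refine (lintegral_finsetSum' _ fun i _ => ?_).symm
        simp only [edist_eq_enorm_sub]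
        exact ((hF _ (us _)).sub (hF _ (us _))).aestronglyMeasurable.enorm
    _ ≤ ∫⁻ t, eVariationOn (F t) s ∂μ := lintegral_mono fun t => eVariationOn.sum_le hu us

theorem stmt6_general
    (f g : ℝ → ℝ) (hgp : Function.Periodic g 1)
    (hfm : Measurable f) (hgm : Measurable g)
    (hfBV : BoundedVariationOn f (Set.Icc 0 1))
    (hgBV : BoundedVariationOn g (Set.Icc 0 1))
    (G : ℝ → ℝ) (hG : ∀ x, G x = ∫ u in (0:ℝ)..1, f u * g (u + x)) :
    eVariationOn G (Set.Icc 0 1) ≤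
      eVariationOn g (Set.Icc 0 1) * ENNReal.ofReal (∫ u in (0:ℝ)..1, |f u|) := by
  have hIcc : volume (Icc (0:ℝ) 1) < ⊤ := by simp
  have hG' : G = fun x => ∫ t in Ioc 0 1, f t * g (t + x) :=
    funext fun x => by rw [hG, intervalIntegral.integral_of_le zero_le_one]
  have hf : IntegrableOn f (Icc 0 1) :=
    hfBV.integrableOn measurableSet_Icc hIcc hfm.aestronglyMeasurable
  have hF : ∀ x ∈ Icc (0:ℝ) 1,
      Integrable (fun t => f t * g (t + x)) (volume.restrict (Ioc 0 1)) := by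
    intro x hx
    have hgx : BoundedVariationOn (fun t => g (t + x)) (Icc 0 1) := by
      simp_rw [BoundedVariationOn, add_comm _ x, hgp.eVariationOn_comp_const_add hx]
      exact hgBV
    refine IntegrableOn.mono_set ?_ Ioc_subset_Icc_self
    exact (hfBV.mul hgx).integrableOn measurableSet_Icc hIcc (by fun_prop)
  calc eVariationOn G (Icc 0 1)
      ≤ ∫⁻ t in Ioc 0 1, eVariationOn (fun x => f t * g (t + x)) (Icc 0 1) :=
        hG' ▸ eVariationOn_integral_le hF
    _ ≤ ∫⁻ t in Ioc 0 1, ‖f t‖ₑ * eVariationOn g (Icc 0 1) := by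
        refine setLIntegral_mono' measurableSet_Ioc fun t ht => ?_
        rw [← hgp.eVariationOn_comp_const_add (Ioc_subset_Icc_self ht)]
        exact eVariationOn_const_mul_le _ _ _
    _ = eVariationOn g (Icc 0 1) * ENNReal.ofReal (∫ u in (0:ℝ)..1, |f u|) := by
        simp_rw [lintegral_mul_const' _ _ hgBV, intervalIntegral.integral_of_le zero_le_one,
          ← Real.norm_eq_abs,
          ofReal_integral_norm_eq_lintegral_enorm (hf.mono_set Ioc_subset_Icc_self), mul_comm]

/-- If `f, g : ℝ → ℝ` are `1`-periodic and of bounded variation on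
`[0,1]`, then `G(x) = ∫₀¹ f(u) g(u+x) du` has bounded variation on `[0,1]` with
`V(G) ≤ V(g) · ‖f‖_{L¹([0,1])}`. -/
theorem stmt6
    (f g : ℝ → ℝ) (hfp : Function.Periodic f 1) (hgp : Function.Periodic g 1)
    (hfm : Measurable f) (hgm : Measurable g)
    (hfBV : BoundedVariationOn f (Set.Icc 0 1))
    (hgBV : BoundedVariationOn g (Set.Icc 0 1))
    (G : ℝ → ℝ) (hG : ∀ x, G x = ∫ u in (0:ℝ)..1, f u * g (u + x)) :
    eVariationOn G (Set.Icc 0 1) ≤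
      eVariationOn g (Set.Icc 0 1) * ENNReal.ofReal (∫ u in (0:ℝ)..1, |f u|) :=
  stmt6_general f g hgp hfm hgm hfBV hgBV G hG
end

section
/- Let X₁, X₂, … be i.i.d. real-valued random variables with partial sums S_k = X₁ + ⋯ + X_k, and define ψ(k) = sup_{t ∈ [0,1]} |P({S_k} ≤ t) − t|, where {·} denotes fractional part. Suppose ψ(k) ≤ C k^{-(1+δ)} for some δ > 0 and all k ≥ 1. Let f, g : ℝ → ℝ be 1-periodic functions of bounded variation on [0,1] with ∫₀¹ f = ∫₀¹ g = 0, and let U be uniform on [0,1) independent of the X_j. Then the series ∑_{k=1}^∞ E[f(U) g(U + S_k)] converges absolutely, with |E[f(U) g(U + S_k)]| ≤ V(g) ‖f‖_{L¹} ψ(k) for every k. -/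
/-!
Write `h(s) = ∫₀¹ f(u) g(u + s) du`. Independence of `U` and `S_k` together with Fubini give
`E[f(U) g(U + S_k)] = E[h({S_k})]`, while `∫₀¹ h = 0` because `g` has mean zero. The variation
function `W` of `g` satisfies `|g b - g a| ≤ W b - W a` for `a ≤ b` and `W (x + 1) = W x + V(g)`;
integrating against `|f|` shows that `h` is Lipschitz with variation at most `‖f‖₁ V(g)` on
`[0,1]`. Koksma's inequality, proved by approximating `h` by step functions on the grid `i/n` and
summing by parts, bounds `|E[h({S_k})] - ∫₀¹ h|` by `V(h) ψ(k)`; summability then follows from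
`ψ(k) ≤ C k^{-(1+δ)}`.
-/

open MeasureTheory ProbabilityTheory
open Set Filter Topology Function
open scoped ENNReal NNReal

section PeriodicVariation

variable {g : ℝ → ℝ}

theorem Function.Periodic.eVariationOn_Icc_add {c : ℝ} (hg : Periodic g c) (a b : ℝ) :
    eVariationOn g (Icc (a + c) (b + c)) = eVariationOn g (Icc a b) := by
  rw [← image_add_const_Icc, ← eVariationOn.comp_eq_of_monotoneOn g (· + c)
    ((monotone_id.add_const c).monotoneOn _)]
  exact congrArg (eVariationOn · _) (funext hg)

theorem Function.Periodic.eVariationOn_Icc_add_one (hg : Periodic g 1) (a : ℝ) :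
    eVariationOn g (Icc a (a + 1)) = eVariationOn g (Icc 0 1) := by
  set r := Int.fract a
  have hr : r ∈ Icc (0:ℝ) 1 := ⟨Int.fract_nonneg a, (Int.fract_lt_one a).le⟩
  have hshift : eVariationOn g (Icc a (a + 1)) = eVariationOn g (Icc r (r + 1)) := by
    have := (hg.int_mul ⌊a⌋).eVariationOn_Icc_add r (r + 1)
    rwa [mul_one, Int.fract_add_floor, add_right_comm, Int.fract_add_floor] at this
  have hsplit (x y z : ℝ) (hxy : x ≤ y) (hyz : y ≤ z) :
      eVariationOn g (Icc x y) + eVariationOn g (Icc y z) = eVariationOn g (Icc x z) := by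
    simpa using eVariationOn.Icc_add_Icc g (s := univ) hxy hyz trivial
  have hwrap : eVariationOn g (Icc 1 (r + 1)) = eVariationOn g (Icc 0 r) := by
    simpa using hg.eVariationOn_Icc_add 0 r
  rw [hshift, ← hsplit r 1 (r + 1) hr.2 (by linarith [hr.1]), hwrap, add_comm,
    hsplit 0 r 1 hr.1 hr.2]

theorem Function.Periodic.locallyBoundedVariationOn (hg : Periodic g 1)
    (hgBV : BoundedVariationOn g (Icc 0 1)) : LocallyBoundedVariationOn g univ := by
  intro a b _ _
  have hlen (n : ℕ) : BoundedVariationOn g (Icc a (a + n)) := by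
    induction n with
    | zero => simp [BoundedVariationOn, eVariationOn.subsingleton]
    | succ n ih =>
      have := eVariationOn.Icc_add_Icc g (s := univ) (a := a) (b := a + n) (c := a + n + 1)
        (by linarith [n.cast_nonneg (α := ℝ)]) (by linarith) trivial
      simp only [univ_inter] at this
      rw [BoundedVariationOn, Nat.cast_succ, ← add_assoc, ← this,
        hg.eVariationOn_Icc_add_one]
      exact ENNReal.add_ne_top.2 ⟨ih, hgBV⟩
  refine ne_top_of_le_ne_top (hlen ⌈b - a⌉₊) (eVariationOn.mono _ ?_)
  rw [univ_inter]
  exact Icc_subset_Icc le_rfl (by linarith [Nat.le_ceil (b - a)])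

theorem Function.Periodic.variationOnFromTo_add_one (hg : Periodic g 1)
    (hgBV : BoundedVariationOn g (Icc 0 1)) (x : ℝ) :
    variationOnFromTo g univ 0 (x + 1) =
      variationOnFromTo g univ 0 x + (eVariationOn g (Icc 0 1)).toReal := by
  rw [← variationOnFromTo.add (hg.locallyBoundedVariationOn hgBV) trivial (mem_univ x) trivial,
    variationOnFromTo.eq_of_le g univ (le_add_of_nonneg_right zero_le_one), univ_inter,
    hg.eVariationOn_Icc_add_one]

theorem Function.Periodic.monotone_variationOnFromTo (hg : Periodic g 1)
    (hgBV : BoundedVariationOn g (Icc 0 1)) : Monotone (variationOnFromTo g univ 0) :=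
  monotoneOn_univ.1 (variationOnFromTo.monotoneOn (hg.locallyBoundedVariationOn hgBV) trivial)

theorem BoundedVariationOn.abs_le {α : Type*} [LinearOrder α] {f : α → ℝ} {s : Set α}
    (hf : BoundedVariationOn f s) {a x : α} (ha : a ∈ s) (hx : x ∈ s) :
    |f x| ≤ |f a| + (eVariationOn f s).toReal := by
  have := hf.dist_le hx ha
  rw [Real.dist_eq] at this
  linarith [abs_sub_abs_le_abs_sub (f x) (f a)]

theorem Function.Periodic.map_fract (hg : Periodic g 1) (x : ℝ) : g (Int.fract x) = g x := by
  simpa only [mul_one, Int.self_sub_floor] using hg.sub_int_mul_eq (x := x) ⌊x⌋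

theorem Function.Periodic.abs_le (hg : Periodic g 1) (hgBV : BoundedVariationOn g (Icc 0 1))
    (x : ℝ) : |g x| ≤ |g 0| + (eVariationOn g (Icc 0 1)).toReal := by
  rw [← hg.map_fract]
  exact hgBV.abs_le ⟨le_rfl, zero_le_one⟩ ⟨Int.fract_nonneg x, (Int.fract_lt_one x).le⟩

end PeriodicVariation

theorem BoundedVariationOn.integrableOn_Icc {f : ℝ → ℝ} {μ : Measure ℝ}
    [IsFiniteMeasureOnCompacts μ] {a b : ℝ} (hf : BoundedVariationOn f (Icc a b)) : IntegrableOn f (Icc a b) μ := by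
  obtain ⟨p, q, hp, hq, rfl⟩ := hf.locallyBoundedVariationOn.exists_monotoneOn_sub_monotoneOn
  exact (hp.integrableOn_isCompact isCompact_Icc).sub (hq.integrableOn_isCompact isCompact_Icc)

theorem LocallyBoundedVariationOn.measurable {f : ℝ → ℝ} (hf : LocallyBoundedVariationOn f univ) :
    Measurable f := by
  obtain ⟨p, q, hp, hq, rfl⟩ := hf.exists_monotoneOn_sub_monotoneOn
  exact (monotoneOn_univ.1 hp).measurable.sub (monotoneOn_univ.1 hq).measurable

theorem BoundedVariationOn.sum_abs_sub_le {α : Type*} [LinearOrder α] {f : α → ℝ} {s : Set α}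
    (hf : BoundedVariationOn f s) {n : ℕ} {u : ℕ → α} (hu : MonotoneOn u (Icc 0 n))
    (hus : ∀ i ∈ Icc 0 n, u i ∈ s) :
    ∑ i ∈ Finset.range n, |f (u (i + 1)) - f (u i)| ≤ (eVariationOn f s).toReal := by
  have hsum := eVariationOn.sum_le_of_monotoneOn_Icc (f := f) hu hus
  rw [← Finset.range_eq_Ico] at hsum
  calc ∑ i ∈ Finset.range n, |f (u (i + 1)) - f (u i)|
      = (∑ i ∈ Finset.range n, edist (f (u (i + 1))) (f (u i))).toReal := by
        rw [ENNReal.toReal_sum fun i _ => edist_ne_top _ _]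
        simp only [← dist_edist, Real.dist_eq]
    _ ≤ (eVariationOn f s).toReal := ENNReal.toReal_mono hf hsum

theorem eVariationOn_le_ofReal {α : Type*} [LinearOrder α] {f : α → ℝ} {s : Set α} {C : ℝ}
    (h : ∀ (n : ℕ) (u : ℕ → α), Monotone u → (∀ i, u i ∈ s) →
      ∑ i ∈ Finset.range n, |f (u (i + 1)) - f (u i)| ≤ C) :
    eVariationOn f s ≤ ENNReal.ofReal C := by
  refine iSup_le fun ⟨n, u, hu, hus⟩ => ?_
  calc ∑ i ∈ Finset.range n, edist (f (u (i + 1))) (f (u i))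
      = ENNReal.ofReal (∑ i ∈ Finset.range n, |f (u (i + 1)) - f (u i)|) := by
        rw [ENNReal.ofReal_sum_of_nonneg fun i _ => abs_nonneg _]
        simp only [edist_dist, Real.dist_eq]
    _ ≤ ENNReal.ofReal C := ENNReal.ofReal_le_ofReal (h n u hu hus)

theorem intervalIntegral_comp_add_sub_comp_add {W : ℝ → ℝ} {c : ℝ}
    (hW : ∀ a b, IntervalIntegrable W volume a b) (hWc : ∀ v, W (v + 1) = W v + c) (x y : ℝ) :
    ∫ u in (0:ℝ)..1, (W (u + y) - W (u + x)) = (y - x) * c := by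
  have hshift (a : ℝ) : ∫ u in (0:ℝ)..1, W (u + a) = ∫ v in a..a + 1, W v := by
    rw [intervalIntegral.integral_comp_add_right, zero_add, add_comm]
  have hint (a : ℝ) : IntervalIntegrable (fun u => W (u + a)) volume 0 1 := by
    simpa using (hW a (1 + a)).comp_add_right a
  have hstep : ∫ v in x + 1..y + 1, W v = (∫ v in x..y, W v) + (y - x) * c := by
    rw [← intervalIntegral.integral_comp_add_right, funext hWc,
      intervalIntegral.integral_add (hW x y) intervalIntegrable_const,
      intervalIntegral.integral_const, smul_eq_mul]
  have hxy := intervalIntegral.integral_add_adjacent_intervals (hW x y) (hW y (y + 1))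
  have hxy' := intervalIntegral.integral_add_adjacent_intervals (hW x (x + 1)) (hW (x + 1) (y + 1))
  rw [intervalIntegral.integral_sub (hint y) (hint x), hshift, hshift]
  linarith

/-- For `U` uniform on `[0,1)`, `periodicCorrelation f g s = E[f(U) g(U + s)]`. -/
noncomputable def periodicCorrelation (f g : ℝ → ℝ) (s : ℝ) : ℝ :=
  ∫ u in (0:ℝ)..1, f u * g (u + s)

section Correlation

variable {f g : ℝ → ℝ}

theorem Function.Periodic.periodicCorrelation (hg : Periodic g 1) :
    Periodic (periodicCorrelation f g) 1 := fun s => by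
  simp only [_root_.periodicCorrelation, ← add_assoc, show ∀ x, g (x + 1) = g x from hg]

theorem integrable_prod_mul_comp_add {s : Set ℝ} (hs : s ⊆ Icc 0 1) (ν : Measure ℝ)
    [IsFiniteMeasure ν] (hfBV : BoundedVariationOn f (Icc 0 1)) (hgp : Periodic g 1)
    (hgBV : BoundedVariationOn g (Icc 0 1)) :
    Integrable (fun p : ℝ × ℝ => f p.1 * g (p.1 + p.2)) ((volume.restrict s).prod ν) :=
  ((hfBV.integrableOn_Icc.mono_set hs).comp_fst ν).mul_bdd
    ((hgp.locallyBoundedVariationOn hgBV).measurable.comp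
      (measurable_fst.add measurable_snd)).aestronglyMeasurable
    (Eventually.of_forall fun _ => hgp.abs_le hgBV _)

theorem intervalIntegrable_mul_comp_add (hfBV : BoundedVariationOn f (Icc 0 1))
    (hgp : Periodic g 1) (hgBV : BoundedVariationOn g (Icc 0 1)) (s : ℝ) :
    IntervalIntegrable (fun u => f u * g (u + s)) volume 0 1 :=
  (intervalIntegrable_iff_integrableOn_Ioc_of_le zero_le_one).2 <|
    (hfBV.integrableOn_Icc.mono_set Ioc_subset_Icc_self).mul_bdd
      ((hgp.locallyBoundedVariationOn hgBV).measurable.comp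
        (measurable_add_const s)).aestronglyMeasurable
      (Eventually.of_forall fun _ => hgp.abs_le hgBV _)

theorem intervalIntegrable_abs_mul_variationOnFromTo_sub (hfBV : BoundedVariationOn f (Icc 0 1))
    (hgp : Periodic g 1) (hgBV : BoundedVariationOn g (Icc 0 1)) (x y : ℝ) :
    IntervalIntegrable (fun u => |f u| *
      (variationOnFromTo g univ 0 (u + y) - variationOnFromTo g univ 0 (u + x))) volume 0 1 := by
  have hW := hgp.monotone_variationOnFromTo hgBV
  have hdiff := (hW.comp (monotone_id.add_const y)).intervalIntegrable.sub
    (hW.comp (monotone_id.add_const x)).intervalIntegrable (μ := volume) (a := 0) (b := 1)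
  exact (intervalIntegrable_iff_integrableOn_Ioc_of_le zero_le_one).2 <|
    hdiff.1.bdd_mul (hfBV.integrableOn_Icc.mono_set Ioc_subset_Icc_self).1.norm <|
      ae_restrict_of_forall_mem measurableSet_Ioc fun u hu => by
        simpa using hfBV.abs_le (left_mem_Icc.2 zero_le_one) (Ioc_subset_Icc_self hu)

theorem abs_periodicCorrelation_sub_le (hfBV : BoundedVariationOn f (Icc 0 1))
    (hgp : Periodic g 1) (hgBV : BoundedVariationOn g (Icc 0 1)) {x y : ℝ} (hxy : x ≤ y) :
    |periodicCorrelation f g y - periodicCorrelation f g x| ≤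
      ∫ u in (0:ℝ)..1, |f u| *
        (variationOnFromTo g univ 0 (u + y) - variationOnFromTo g univ 0 (u + x)) := by
  have hloc := hgp.locallyBoundedVariationOn hgBV
  have hy := intervalIntegrable_mul_comp_add hfBV hgp hgBV y
  have hx := intervalIntegrable_mul_comp_add hfBV hgp hgBV x
  rw [periodicCorrelation, periodicCorrelation, ← intervalIntegral.integral_sub hy hx]
  refine (intervalIntegral.abs_integral_le_integral_abs zero_le_one).trans
    (intervalIntegral.integral_mono_on zero_le_one (hy.sub hx).abs ?_ fun u _ => ?_)
  · exact intervalIntegrable_abs_mul_variationOnFromTo_sub hfBV hgp hgBV x y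
  · rw [← mul_sub, abs_mul]
    exact mul_le_mul_of_nonneg_left (variationOnFromTo.abs_sub_le_sub_of_le hloc trivial
      trivial trivial (by linarith)) (abs_nonneg _)

theorem lipschitzWith_periodicCorrelation (hfBV : BoundedVariationOn f (Icc 0 1))
    (hgp : Periodic g 1) (hgBV : BoundedVariationOn g (Icc 0 1)) :
    LipschitzWith (Real.toNNReal ((|f 0| + (eVariationOn f (Icc 0 1)).toReal) *
      (eVariationOn g (Icc 0 1)).toReal)) (periodicCorrelation f g) := by
  set M := |f 0| + (eVariationOn f (Icc 0 1)).toReal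
  have hW := hgp.monotone_variationOnFromTo hgBV
  refine LipschitzWith.of_dist_le' fun x y => ?_
  wlog hxy : x ≤ y generalizing x y
  · rw [dist_comm, dist_comm x]
    exact this y x (le_of_not_ge hxy)
  rw [dist_comm, Real.dist_eq, Real.dist_eq, abs_sub_comm x, abs_of_nonneg (sub_nonneg.2 hxy)]
  calc |periodicCorrelation f g y - periodicCorrelation f g x|
      ≤ ∫ u in (0:ℝ)..1, |f u| *
          (variationOnFromTo g univ 0 (u + y) - variationOnFromTo g univ 0 (u + x)) :=
        abs_periodicCorrelation_sub_le hfBV hgp hgBV hxy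
    _ ≤ ∫ u in (0:ℝ)..1, M *
          (variationOnFromTo g univ 0 (u + y) - variationOnFromTo g univ 0 (u + x)) :=
        intervalIntegral.integral_mono_on zero_le_one
          (intervalIntegrable_abs_mul_variationOnFromTo_sub hfBV hgp hgBV x y)
          (((hW.comp (monotone_id.add_const y)).intervalIntegrable.sub
            (hW.comp (monotone_id.add_const x)).intervalIntegrable).const_mul M)
          fun u hu => mul_le_mul_of_nonneg_right (hfBV.abs_le (left_mem_Icc.2 zero_le_one) hu)
            (sub_nonneg.2 (hW (by linarith)))
    _ = M * (eVariationOn g (Icc 0 1)).toReal * (y - x) := by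
        rw [intervalIntegral.integral_const_mul, intervalIntegral_comp_add_sub_comp_add
          (fun _ _ => hW.intervalIntegrable) (hgp.variationOnFromTo_add_one hgBV)]
        ring

theorem eVariationOn_periodicCorrelation_toReal_le (hfBV : BoundedVariationOn f (Icc 0 1))
    (hgp : Periodic g 1) (hgBV : BoundedVariationOn g (Icc 0 1)) :
    (eVariationOn (periodicCorrelation f g) (Icc 0 1)).toReal ≤
      (∫ u in (0:ℝ)..1, |f u|) * (eVariationOn g (Icc 0 1)).toReal := by
  have hW := hgp.monotone_variationOnFromTo hgBV
  refine ENNReal.toReal_le_of_le_ofReal (mul_nonneg (intervalIntegral.integral_nonneg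
    zero_le_one fun _ _ => abs_nonneg _) ENNReal.toReal_nonneg)
    (eVariationOn_le_ofReal fun n u hu hus => ?_)
  calc ∑ i ∈ Finset.range n, |periodicCorrelation f g (u (i + 1)) - periodicCorrelation f g (u i)|
      ≤ ∑ i ∈ Finset.range n, ∫ v in (0:ℝ)..1, |f v| *
          (variationOnFromTo g univ 0 (v + u (i + 1)) - variationOnFromTo g univ 0 (v + u i)) :=
        Finset.sum_le_sum fun i _ => abs_periodicCorrelation_sub_le hfBV hgp hgBV (hu i.le_succ)
    _ = ∫ v in (0:ℝ)..1, |f v| *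
          (variationOnFromTo g univ 0 (v + u n) - variationOnFromTo g univ 0 (v + u 0)) := by
        rw [← intervalIntegral.integral_finsetSum fun i _ =>
          intervalIntegrable_abs_mul_variationOnFromTo_sub hfBV hgp hgBV _ _]
        congr 1 with v
        rw [← Finset.mul_sum, Finset.sum_range_sub (fun i => variationOnFromTo g univ 0 (v + u i))]
    _ ≤ ∫ v in (0:ℝ)..1, |f v| * (eVariationOn g (Icc 0 1)).toReal := by
        refine intervalIntegral.integral_mono_on zero_le_one
          (intervalIntegrable_abs_mul_variationOnFromTo_sub hfBV hgp hgBV _ _)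
          ((((intervalIntegrable_iff_integrableOn_Ioc_of_le zero_le_one).2
            (hfBV.integrableOn_Icc.mono_set Ioc_subset_Icc_self)).abs).mul_const _)
          fun v _ => mul_le_mul_of_nonneg_left ?_ (abs_nonneg _)
        have hwindow := hgp.variationOnFromTo_add_one hgBV v
        have h1 := hW (by linarith [(hus n).2] : v + u n ≤ v + 1)
        have h0 := hW (by linarith [(hus 0).1] : v ≤ v + u 0)
        linarith
    _ = (∫ u in (0:ℝ)..1, |f u|) * (eVariationOn g (Icc 0 1)).toReal :=
        intervalIntegral.integral_mul_const _ _

theorem integral_periodicCorrelation_eq_zero (hfBV : BoundedVariationOn f (Icc 0 1))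
    (hgp : Periodic g 1) (hgBV : BoundedVariationOn g (Icc 0 1))
    (hg0 : ∫ x in (0:ℝ)..1, g x = 0) :
    ∫ s in (0:ℝ)..1, periodicCorrelation f g s = 0 := by
  have hF := integrable_prod_mul_comp_add Ioc_subset_Icc_self (volume.restrict (Ioc 0 1))
    hfBV hgp hgBV
  have hinner (u : ℝ) : ∫ s in Ioc (0:ℝ) 1, f u * g (u + s) = 0 := by
    rw [integral_const_mul, ← intervalIntegral.integral_of_le zero_le_one,
      intervalIntegral.integral_comp_add_left, add_zero, hgp.intervalIntegral_add_eq u 0,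
      zero_add, hg0, mul_zero]
  simp only [periodicCorrelation, intervalIntegral.integral_of_le zero_le_one]
  rw [← integral_prod_symm _ hF, integral_prod _ hF]
  simp [hinner]

end Correlation

noncomputable def stepApprox (h : ℝ → ℝ) (n : ℕ) (x : ℝ) : ℝ :=
  h 0 + ∑ i ∈ Finset.range n,
    (Ioi ((i : ℝ) / n)).indicator (fun _ => h ((i + 1 : ℕ) / n) - h (i / n)) x

section Koksma

variable {h : ℝ → ℝ} {K : ℝ≥0}

theorem stepApprox_eq (h : ℝ → ℝ) {n : ℕ} (hn : 0 < n) {x : ℝ} (hx : x ∈ Icc (0:ℝ) 1) :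
    stepApprox h n x = h (⌈x * n⌉₊ / n) := by
  have hn' : (0:ℝ) < n := Nat.cast_pos.2 hn
  have hj : ⌈x * n⌉₊ ≤ n := Nat.ceil_le.2 (by nlinarith [hx.2])
  have hterm (i : ℕ) : (i : ℝ) / n < x ↔ i < ⌈x * n⌉₊ := by
    rw [Nat.lt_ceil, div_lt_iff₀ hn']
  rw [stepApprox, ← Finset.sum_range_add_sum_Ico _ hj,
    Finset.sum_congr rfl fun (i : ℕ) hi => indicator_of_mem (s := Ioi ((i : ℝ) / n))
      ((hterm i).2 (Finset.mem_range.1 hi)) _,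
    Finset.sum_eq_zero fun (i : ℕ) hi => indicator_of_notMem (s := Ioi ((i : ℝ) / n))
      (fun hmem => (Finset.mem_Ico.1 hi).1.not_gt ((hterm i).1 hmem)) _,
    Finset.sum_range_sub (fun i : ℕ => h (i / n))]
  simp

theorem abs_sub_stepApprox_le (hh : LipschitzOnWith K h (Icc 0 1)) {n : ℕ} (hn : 0 < n)
    {x : ℝ} (hx : x ∈ Icc (0:ℝ) 1) : |h x - stepApprox h n x| ≤ K / n := by
  have hn' : (0:ℝ) < n := Nat.cast_pos.2 hn
  rw [stepApprox_eq h hn hx]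
  set j := ⌈x * n⌉₊
  have hjx : x ≤ j / n := (le_div_iff₀ hn').2 (Nat.le_ceil _)
  have hjx' : (j : ℝ) / n ≤ x + 1 / n := by
    rw [div_le_iff₀ hn', add_mul, one_div_mul_cancel hn'.ne']
    exact (Nat.ceil_lt_add_one (by nlinarith [hx.1])).le
  have hj1 : (j : ℝ) / n ≤ 1 :=
    div_le_one_of_le₀ (by exact_mod_cast Nat.ceil_le.2 (by nlinarith [hx.2])) hn'.le
  have := hh.dist_le_mul x hx (j / n) ⟨by positivity, hj1⟩
  rw [Real.dist_eq, Real.dist_eq, abs_sub_comm x,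
    abs_of_nonneg (a := (j : ℝ) / n - x) (by linarith)] at this
  calc |h x - h (j / n)| ≤ K * (j / n - x) := this
    _ ≤ K * (1 / n) := by gcongr; linarith
    _ = K / n := by ring

theorem integrable_stepApprox (μ : Measure ℝ) [IsFiniteMeasure μ] (h : ℝ → ℝ) (n : ℕ) :
    Integrable (stepApprox h n) μ :=
  (integrable_const _).add <| integrable_finsetSum _ fun _ _ =>
    (integrable_const _).indicator measurableSet_Ioi

theorem integral_stepApprox (μ : Measure ℝ) [IsProbabilityMeasure μ] (h : ℝ → ℝ) (n : ℕ) :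
    ∫ x, stepApprox h n x ∂μ = h 0 + ∑ i ∈ Finset.range n,
      (1 - μ.real (Iic ((i : ℝ) / n))) * (h ((i + 1 : ℕ) / n) - h (i / n)) := by
  unfold stepApprox
  rw [integral_add (integrable_const _) (integrable_finsetSum _ fun _ _ =>
    (integrable_const _).indicator measurableSet_Ioi), integral_finsetSum _ fun _ _ =>
    (integrable_const _).indicator measurableSet_Ioi]
  simp only [integral_const, probReal_univ, integral_indicator_const _ measurableSet_Ioi,
    smul_eq_mul, one_mul]
  simp only [← compl_Iic, probReal_compl_eq_one_sub measurableSet_Iic]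

theorem abs_integral_sub_integral_stepApprox_le {ρ : Measure ℝ} [IsProbabilityMeasure ρ]
    (hρ : ∀ᵐ x ∂ρ, x ∈ Icc (0:ℝ) 1) (hh : LipschitzOnWith K h (Icc 0 1)) {n : ℕ} (hn : 0 < n) :
    |∫ x, h x ∂ρ - ∫ x, stepApprox h n x ∂ρ| ≤ K / n := by
  have hint : Integrable h ρ := by
    rw [← Measure.restrict_eq_self_of_ae_mem hρ]
    exact hh.continuousOn.integrableOn_compact isCompact_Icc
  rw [← integral_sub hint (integrable_stepApprox ρ h n)]
  simpa using norm_integral_le_of_norm_le_const (f := fun x => h x - stepApprox h n x)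
    (hρ.mono fun x hx => by simpa only [Real.norm_eq_abs] using abs_sub_stepApprox_le hh hn hx)

theorem abs_integral_stepApprox_sub_le {μ ν : Measure ℝ} [IsProbabilityMeasure μ]
    [IsProbabilityMeasure ν] (hh : BoundedVariationOn h (Icc 0 1)) {ψ : ℝ}
    (hψ : ∀ t ∈ Icc (0:ℝ) 1, |μ.real (Iic t) - ν.real (Iic t)| ≤ ψ) (n : ℕ) :
    |∫ x, stepApprox h n x ∂μ - ∫ x, stepApprox h n x ∂ν| ≤
      (eVariationOn h (Icc 0 1)).toReal * ψ := by
  have hψ0 : 0 ≤ ψ := (abs_nonneg _).trans (hψ 0 (left_mem_Icc.2 zero_le_one))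
  have hmem (i : ℕ) (hi : i ≤ n) : (i : ℝ) / n ∈ Icc (0:ℝ) 1 :=
    ⟨by positivity, div_le_one_of_le₀ (by exact_mod_cast hi) (Nat.cast_nonneg n)⟩
  have hvar := hh.sum_abs_sub_le (n := n) (u := fun i => (i : ℝ) / n)
    (fun i _ j _ hij => div_le_div_of_nonneg_right (by exact_mod_cast hij) n.cast_nonneg)
    fun i hi => hmem i hi.2
  rw [integral_stepApprox, integral_stepApprox, add_sub_add_left_eq_sub, ← Finset.sum_sub_distrib]
  refine (Finset.abs_sum_le_sum_abs _ _).trans ?_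
  calc ∑ i ∈ Finset.range n, |(1 - μ.real (Iic ((i : ℝ) / n))) * (h ((i + 1 : ℕ) / n) - h (i / n))
        - (1 - ν.real (Iic ((i : ℝ) / n))) * (h ((i + 1 : ℕ) / n) - h (i / n))|
      ≤ ∑ i ∈ Finset.range n, |h ((i + 1 : ℕ) / n) - h (i / n)| * ψ := by
        refine Finset.sum_le_sum fun i hi => ?_
        rw [← sub_mul, sub_sub_sub_cancel_left, abs_mul, mul_comm, abs_sub_comm (ν.real _)]
        exact mul_le_mul_of_nonneg_left (hψ _ (hmem i (Finset.mem_range.1 hi).le)) (abs_nonneg _)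
    _ ≤ (eVariationOn h (Icc 0 1)).toReal * ψ := by
        rw [← Finset.sum_mul]
        exact mul_le_mul_of_nonneg_right hvar hψ0

/-- Koksma's inequality, for Lipschitz `h`. -/
theorem abs_integral_sub_integral_le_eVariationOn_mul {μ ν : Measure ℝ} [IsProbabilityMeasure μ]
    [IsProbabilityMeasure ν] (hμ : ∀ᵐ x ∂μ, x ∈ Icc (0:ℝ) 1) (hν : ∀ᵐ x ∂ν, x ∈ Icc (0:ℝ) 1)
    (hh : LipschitzOnWith K h (Icc 0 1)) {ψ : ℝ}
    (hψ : ∀ t ∈ Icc (0:ℝ) 1, |μ.real (Iic t) - ν.real (Iic t)| ≤ ψ) :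
    |∫ x, h x ∂μ - ∫ x, h x ∂ν| ≤ (eVariationOn h (Icc 0 1)).toReal * ψ := by
  have hBV : BoundedVariationOn h (Icc 0 1) := by
    simpa using hh.locallyBoundedVariationOn 0 1 (left_mem_Icc.2 zero_le_one)
      (right_mem_Icc.2 zero_le_one)
  have hlim : Tendsto (fun n : ℕ => (eVariationOn h (Icc 0 1)).toReal * ψ + 2 * K / n) atTop
      (𝓝 ((eVariationOn h (Icc 0 1)).toReal * ψ)) := by
    simpa using tendsto_const_nhds.add (tendsto_const_div_atTop_nhds_zero_nat (2 * (K : ℝ)))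
  refine ge_of_tendsto hlim ((eventually_gt_atTop 0).mono fun n hn => ?_)
  have hμn := abs_integral_sub_integral_stepApprox_le hμ hh hn
  have hνn := abs_integral_sub_integral_stepApprox_le hν hh hn
  rw [abs_sub_comm] at hνn
  have := abs_sub_le (∫ x, h x ∂μ) (∫ x, stepApprox h n x ∂μ) (∫ x, h x ∂ν)
  have := abs_sub_le (∫ x, stepApprox h n x ∂μ) (∫ x, stepApprox h n x ∂ν) (∫ x, h x ∂ν)
  have hsplit : 2 * (K : ℝ) / n = K / n + K / n := by ring
  linarith [abs_integral_stepApprox_sub_le hBV hψ n]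

end Koksma

theorem volume_restrict_Icc_real_Iic {t : ℝ} (ht : t ∈ Icc (0:ℝ) 1) :
    (volume.restrict (Icc (0:ℝ) 1)).real (Iic t) = t := by
  have hcap : Iic t ∩ Icc 0 1 = Icc 0 t :=
    ext fun _ => ⟨fun ⟨hxt, hx0, _⟩ => ⟨hx0, hxt⟩, fun ⟨hx0, hxt⟩ => ⟨hxt, hx0, hxt.trans ht.2⟩⟩
  rw [measureReal_restrict_apply measurableSet_Iic, hcap, Real.volume_real_Icc_of_le ht.1, sub_zero]

theorem bddAbove_range_abs_measure_fract_le_sub {Ω : Type*} [MeasurableSpace Ω] (P : Measure Ω)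
    [IsProbabilityMeasure P] (Y : Ω → ℝ) : BddAbove (range fun t : Icc (0:ℝ) 1 =>
      |(P {ω | Int.fract (Y ω) ≤ (t : ℝ)}).toReal - (t : ℝ)|) := by
  refine ⟨1, ?_⟩
  rintro _ ⟨t, rfl⟩
  have hP1 : (P {ω | Int.fract (Y ω) ≤ (t : ℝ)}).toReal ≤ 1 := measureReal_le_one
  have hP0 : 0 ≤ (P {ω | Int.fract (Y ω) ≤ (t : ℝ)}).toReal := ENNReal.toReal_nonneg
  exact abs_sub_le_iff.2 ⟨by linarith [t.2.1], by linarith [t.2.2]⟩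

section Probability

variable {Ω : Type*} [MeasurableSpace Ω] {P : Measure Ω} [IsProbabilityMeasure P] {U Y : Ω → ℝ}
  {f g : ℝ → ℝ}

theorem integral_mul_comp_add_eq_integral_periodicCorrelation (hU : Measurable U)
    (hY : Measurable Y) (hUY : IndepFun U Y P) (hUunif : P.map U = volume.restrict (Ico 0 1))
    (hfBV : BoundedVariationOn f (Icc 0 1)) (hgp : Periodic g 1)
    (hgBV : BoundedVariationOn g (Icc 0 1)) :
    ∫ ω, f (U ω) * g (U ω + Y ω) ∂P =
      ∫ x, periodicCorrelation f g x ∂(P.map fun ω => Int.fract (Y ω)) := by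
  have hF := integrable_prod_mul_comp_add Ico_subset_Icc_self (P.map Y) hfBV hgp hgBV
  have hprod : P.map (fun ω => (U ω, Y ω)) = (P.map U).prod (P.map Y) :=
    (indepFun_iff_map_prod_eq_prod_map_map hU.aemeasurable hY.aemeasurable).1 hUY
  rw [← hUunif, ← hprod] at hF
  rw [← integral_map (hU.prodMk hY).aemeasurable hF.aestronglyMeasurable, hprod,
    integral_prod_symm _ (hprod ▸ hF), hUunif,
    show (P.map fun ω => Int.fract (Y ω)) = (P.map Y).map Int.fract from
      (Measure.map_map measurable_fract hY).symm,
    integral_map measurable_fract.aemeasurable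
      (lipschitzWith_periodicCorrelation hfBV hgp hgBV).continuous.aestronglyMeasurable]
  simp only [hgp.periodicCorrelation.map_fract]
  simp only [periodicCorrelation, intervalIntegral.integral_of_le zero_le_one,
    integral_Ico_eq_integral_Ioo, integral_Ioc_eq_integral_Ioo]

theorem abs_integral_mul_comp_add_le (hU : Measurable U) (hY : Measurable Y)
    (hUY : IndepFun U Y P) (hUunif : P.map U = volume.restrict (Ico 0 1))
    (hfBV : BoundedVariationOn f (Icc 0 1))
    (hgp : Periodic g 1) (hgBV : BoundedVariationOn g (Icc 0 1))
    (hg0 : ∫ x in (0:ℝ)..1, g x = 0) {ψ : ℝ}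
    (hψ : ∀ t ∈ Icc (0:ℝ) 1, |(P {ω | Int.fract (Y ω) ≤ t}).toReal - t| ≤ ψ) :
    |∫ ω, f (U ω) * g (U ω + Y ω) ∂P| ≤
      (eVariationOn g (Icc 0 1)).toReal * (∫ x in (0:ℝ)..1, |f x|) * ψ := by
  have hfract : Measurable fun ω => Int.fract (Y ω) := measurable_fract.comp hY
  set μ := P.map fun ω => Int.fract (Y ω)
  set ν := volume.restrict (Icc (0:ℝ) 1)
  have : IsProbabilityMeasure μ := Measure.isProbabilityMeasure_map hfract.aemeasurable
  have : IsProbabilityMeasure ν := ⟨by simp [ν]⟩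
  have hμ : ∀ᵐ x ∂μ, x ∈ Icc (0:ℝ) 1 := (ae_map_iff hfract.aemeasurable measurableSet_Icc).2 <|
    Eventually.of_forall fun ω => ⟨Int.fract_nonneg _, (Int.fract_lt_one _).le⟩
  have hν : ∀ᵐ x ∂ν, x ∈ Icc (0:ℝ) 1 := ae_restrict_mem measurableSet_Icc
  have hdist (t : ℝ) (ht : t ∈ Icc (0:ℝ) 1) : |μ.real (Iic t) - ν.real (Iic t)| ≤ ψ := by
    rw [map_measureReal_apply hfract measurableSet_Iic, volume_restrict_Icc_real_Iic ht]
    exact hψ t ht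
  have hmean : ∫ x, periodicCorrelation f g x ∂ν = 0 := by
    rw [integral_Icc_eq_integral_Ioc, ← intervalIntegral.integral_of_le zero_le_one,
      integral_periodicCorrelation_eq_zero hfBV hgp hgBV hg0]
  have hψ0 : 0 ≤ ψ := (abs_nonneg _).trans (hψ 0 (left_mem_Icc.2 zero_le_one))
  calc |∫ ω, f (U ω) * g (U ω + Y ω) ∂P|
      = |∫ x, periodicCorrelation f g x ∂μ - ∫ x, periodicCorrelation f g x ∂ν| := by
        rw [integral_mul_comp_add_eq_integral_periodicCorrelation hU hY hUY hUunif hfBV hgp hgBV,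
          hmean, sub_zero]
    _ ≤ (eVariationOn (periodicCorrelation f g) (Icc 0 1)).toReal * ψ :=
        abs_integral_sub_integral_le_eVariationOn_mul hμ hν
          (lipschitzWith_periodicCorrelation hfBV hgp hgBV).lipschitzOnWith hdist
    _ ≤ (∫ x in (0:ℝ)..1, |f x|) * (eVariationOn g (Icc 0 1)).toReal * ψ :=
        mul_le_mul_of_nonneg_right (eVariationOn_periodicCorrelation_toReal_le hfBV hgp hgBV) hψ0
    _ = (eVariationOn g (Icc 0 1)).toReal * (∫ x in (0:ℝ)..1, |f x|) * ψ := by ring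

end Probability

theorem stmt7_general
    {Ω : Type*} [MeasurableSpace Ω] (P : Measure Ω) [IsProbabilityMeasure P]
    (X : ℕ → Ω → ℝ) (hXm : ∀ i, Measurable (X i))
    (S : ℕ → Ω → ℝ) (hS : ∀ k ω, S k ω = ∑ j ∈ Finset.range k, X j ω)
    (ψ : ℕ → ℝ)
    (hψ : ∀ k, ψ k = ⨆ t : Set.Icc (0:ℝ) 1,
        |(P {ω | Int.fract (S k ω) ≤ (t : ℝ)}).toReal - (t : ℝ)|)
    (C δ : ℝ) (hδ : 0 < δ)
    (hdecay : ∀ k : ℕ, 1 ≤ k → ψ k ≤ C * (k : ℝ) ^ (-(1 + δ)))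
    (f g : ℝ → ℝ) (hgp : Function.Periodic g 1)
    (hfBV : BoundedVariationOn f (Set.Icc 0 1))
    (hgBV : BoundedVariationOn g (Set.Icc 0 1))
    (hg0 : ∫ x in (0:ℝ)..1, g x = 0)
    (U : Ω → ℝ) (hUm : Measurable U)
    (hUunif : Measure.map U P = volume.restrict (Set.Ico (0:ℝ) 1))
    (hUindep : IndepFun U (fun ω => (X · ω)) P) :
    Summable (fun k : ℕ => |∫ ω, f (U ω) * g (U ω + S (k+1) ω) ∂P|) ∧
      ∀ k : ℕ, 1 ≤ k →
        |∫ ω, f (U ω) * g (U ω + S k ω) ∂P| ≤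
          (eVariationOn g (Set.Icc 0 1)).toReal * (∫ x in (0:ℝ)..1, |f x|) * ψ k := by
  have hsum (k : ℕ) : Measurable fun x : ℕ → ℝ => ∑ j ∈ Finset.range k, x j :=
    Finset.measurable_sum _ fun j _ => measurable_pi_apply j
  have hSk (k : ℕ) : S k = (fun x : ℕ → ℝ => ∑ j ∈ Finset.range k, x j) ∘ fun ω => (X · ω) :=
    funext (hS k)
  have hbound (k : ℕ) : |∫ ω, f (U ω) * g (U ω + S k ω) ∂P| ≤
      (eVariationOn g (Icc 0 1)).toReal * (∫ x in (0:ℝ)..1, |f x|) * ψ k := by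
    refine abs_integral_mul_comp_add_le hUm ?_ ?_ hUunif hfBV hgp hgBV hg0 fun t ht => ?_
    · rw [hSk]
      exact (hsum k).comp (measurable_pi_lambda _ hXm)
    · rw [hSk]
      exact hUindep.comp measurable_id (hsum k)
    · rw [hψ k]
      exact le_ciSup (bddAbove_range_abs_measure_fract_le_sub P (S k)) ⟨t, ht⟩
  have hconst : 0 ≤ (eVariationOn g (Icc 0 1)).toReal * (∫ x in (0:ℝ)..1, |f x|) :=
    mul_nonneg ENNReal.toReal_nonneg
      (intervalIntegral.integral_nonneg zero_le_one fun _ _ => abs_nonneg _)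
  have hrpow : Summable fun k : ℕ => ((k + 1 : ℕ) : ℝ) ^ (-(1 + δ)) :=
    (summable_nat_add_iff 1).2 (Real.summable_nat_rpow.2 (by linarith))
  refine ⟨Summable.of_nonneg_of_le (fun _ => abs_nonneg _) (fun k => (hbound (k + 1)).trans
    (mul_le_mul_of_nonneg_left (hdecay (k + 1) le_add_self) hconst))
    ((hrpow.mul_left C).mul_left _), fun k _ => hbound k⟩

/-- Let `S_k` be partial sums of i.i.d. real random variables with
`ψ(k) = sup_{t∈[0,1]} |P({S_k} ≤ t) − t| ≤ C k^{-(1+δ)}` for `k ≥ 1`. For `1`-periodic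
mean-zero `f, g` of bounded variation on `[0,1]` and `U` uniform on `[0,1)` independent
of the sequence, the series `∑_k E[f(U) g(U+S_k)]` converges absolutely, and
`|E[f(U) g(U+S_k)]| ≤ V(g) ‖f‖_{L¹} ψ(k)` for every `k ≥ 1`. -/
theorem stmt7
    {Ω : Type*} [MeasurableSpace Ω] (P : Measure Ω) [IsProbabilityMeasure P]
    (X : ℕ → Ω → ℝ) (hXm : ∀ i, Measurable (X i))
    (hindep : iIndepFun (m := fun _ => Real.measurableSpace) X P)
    (hident : ∀ i, Measure.map (X i) P = Measure.map (X 0) P)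
    (S : ℕ → Ω → ℝ) (hS : ∀ k ω, S k ω = ∑ j ∈ Finset.range k, X j ω)
    (ψ : ℕ → ℝ)
    (hψ : ∀ k, ψ k = ⨆ t : Set.Icc (0:ℝ) 1,
        |(P {ω | Int.fract (S k ω) ≤ (t : ℝ)}).toReal - (t : ℝ)|)
    (C δ : ℝ) (hδ : 0 < δ)
    (hdecay : ∀ k : ℕ, 1 ≤ k → ψ k ≤ C * (k : ℝ) ^ (-(1 + δ)))
    (f g : ℝ → ℝ) (hfp : Function.Periodic f 1) (hgp : Function.Periodic g 1)
    (hfm : Measurable f) (hgm : Measurable g)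
    (hfBV : BoundedVariationOn f (Set.Icc 0 1))
    (hgBV : BoundedVariationOn g (Set.Icc 0 1))
    (hf0 : ∫ x in (0:ℝ)..1, f x = 0) (hg0 : ∫ x in (0:ℝ)..1, g x = 0)
    (U : Ω → ℝ) (hUm : Measurable U)
    (hUunif : Measure.map U P = volume.restrict (Set.Ico (0:ℝ) 1))
    (hUindep : IndepFun U (fun ω => (X · ω)) P) :
    Summable (fun k : ℕ => |∫ ω, f (U ω) * g (U ω + S (k+1) ω) ∂P|) ∧
      ∀ k : ℕ, 1 ≤ k →
        |∫ ω, f (U ω) * g (U ω + S k ω) ∂P| ≤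
          (eVariationOn g (Set.Icc 0 1)).toReal * (∫ x in (0:ℝ)..1, |f x|) * ψ k :=
  stmt7_general P X hXm S hS ψ hψ C δ hδ hdecay f g hgp hfBV hgBV hg0 U hUm hUunif hUindep
end

section
/- Let X₁, X₂, … be i.i.d. real-valued random variables with ψ(k) = sup_{t∈[0,1]} |P({S_k} ≤ t) − t| → 0 as k → ∞, where S_k = X₁+⋯+X_k. Then the characteristic function φ(x) = E exp(ixX₁) satisfies |φ(2πh)| < 1 for every nonzero integer h. -/
open MeasureTheory ProbabilityTheory Filter

/-!
If `‖φ(2πh)‖ = 1`, equality in `‖E exp(2πihX₁)‖ ≤ 1` forces `exp(2πihX₁)` to be a.s. a constant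
`c`, hence `exp(2πihS_k) = c^k` a.s. for every `k`. The solutions of `exp(2πihy) = c^k` in `[0,1)`
are at most `|h|` points, so `{S_k}` has an atom of mass at least `1/|h|`, and an atom of mass `p`
keeps the distribution function at Kolmogorov distance at least `p/4` from the uniform one.
Thus `ψ(k) ≥ 1/(4|h|)` for all `k`, contradicting `ψ(k) → 0`.
-/

section Characters

lemma exp_mul_sum_mul_I {ι : Type*} (x : ℝ) (s : Finset ι) (f : ι → ℝ) :
    Complex.exp (↑x * ↑(∑ i ∈ s, f i) * Complex.I) =
      ∏ i ∈ s, Complex.exp (↑x * ↑(f i) * Complex.I) := by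
  rw [← Complex.exp_sum]
  push_cast
  rw [Finset.mul_sum, Finset.sum_mul]

variable (h : ℤ)

lemma periodic_exp_two_pi_int_mul_mul_I :
    Function.Periodic (fun y : ℝ => Complex.exp (↑(2 * Real.pi * h) * ↑y * Complex.I)) 1 := by
  intro y
  have : (↑(2 * Real.pi * h) * ↑(y + 1) * Complex.I : ℂ) =
      ↑(2 * Real.pi * h) * ↑y * Complex.I + h * (2 * Real.pi * Complex.I) := by
    push_cast; ring
  simp only [this, Complex.exp_add, Complex.exp_int_mul_two_pi_mul_I, mul_one]

lemma exp_two_pi_int_mul_fract_mul_I (y : ℝ) :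
    Complex.exp (↑(2 * Real.pi * h) * ↑(Int.fract y) * Complex.I) =
      Complex.exp (↑(2 * Real.pi * h) * ↑y * Complex.I) := by
  simpa only [mul_one, Int.self_sub_floor] using
    (periodic_exp_two_pi_int_mul_mul_I h).sub_int_mul_eq (x := y) ⌊y⌋

lemma exists_int_eq_mul_sub_of_exp_eq {y y' : ℝ}
    (hyy' : Complex.exp (↑(2 * Real.pi * h) * ↑y * Complex.I) =
      Complex.exp (↑(2 * Real.pi * h) * ↑y' * Complex.I)) :
    ∃ n : ℤ, h * (y - y') = n := by
  obtain ⟨n, hn⟩ := Complex.exp_eq_exp_iff_exists_int.mp hyy'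
  refine ⟨n, ?_⟩
  have him : 2 * Real.pi * h * y = 2 * Real.pi * h * y' + n * (2 * Real.pi) := by
    simpa using congrArg Complex.im hn
  apply mul_left_cancel₀ (by positivity : 2 * Real.pi ≠ 0)
  linear_combination him

variable {h}

-- Distinct points of the fibre are at least `1/|h|` apart, so they lie in distinct intervals
-- `[m/|h|, (m+1)/|h|)`.
lemma injOn_floor_natAbs_mul (hh : h ≠ 0) (d : ℂ) :
    {y ∈ Set.Ico (0 : ℝ) 1 | Complex.exp (↑(2 * Real.pi * h) * ↑y * Complex.I) = d}.InjOn
      fun y => ⌊(h.natAbs : ℝ) * y⌋ := by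
  rintro y ⟨-, hyd⟩ y' ⟨-, hy'd⟩ hfloor
  obtain ⟨n, hn⟩ := exists_int_eq_mul_sub_of_exp_eq h (hyd.trans hy'd.symm)
  have hgap := Int.abs_sub_lt_one_of_floor_eq_floor hfloor
  have hn0 : n = 0 := by
    rw [← mul_sub, Nat.cast_natAbs, Int.cast_abs, abs_mul, abs_abs, ← abs_mul, hn] at hgap
    exact Int.abs_lt_one_iff.mp (by exact_mod_cast hgap)
  rw [hn0, Int.cast_zero, mul_eq_zero, sub_eq_zero] at hn
  exact hn.resolve_left (by exact_mod_cast hh)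

lemma finite_and_ncard_le_natAbs (hh : h ≠ 0) (d : ℂ) :
    let A := {y ∈ Set.Ico (0 : ℝ) 1 | Complex.exp (↑(2 * Real.pi * h) * ↑y * Complex.I) = d}
    A.Finite ∧ A.ncard ≤ h.natAbs := by
  intro A
  have hmaps : Set.MapsTo (fun y => ⌊(h.natAbs : ℝ) * y⌋) A (Finset.Ico 0 (h.natAbs : ℤ)) := by
    rintro y ⟨⟨hy0, hy1⟩, -⟩
    have : (0 : ℝ) < h.natAbs := by exact_mod_cast Int.natAbs_pos.mpr hh
    simp only [Finset.coe_Ico, Set.mem_Ico, Int.floor_nonneg, Int.floor_lt]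
    exact ⟨by positivity, by simpa using (mul_lt_iff_lt_one_right this).mpr hy1⟩
  have hinj := injOn_floor_natAbs_mul hh d
  refine ⟨Set.Finite.of_injOn hmaps hinj (Finset.finite_toSet _), ?_⟩
  simpa only [Set.ncard_coe_finset, Int.card_Ico, sub_zero, Int.toNat_natCast] using
    Set.ncard_le_ncard_of_injOn _ hmaps hinj

lemma ae_exp_mul_sum_mul_I_eq_pow {Ω : Type*} [MeasurableSpace Ω] {P : Measure Ω}
    {X : ℕ → Ω → ℝ} (x : ℝ) {c : ℂ} (hX : ∀ i, ∀ᵐ ω ∂P, Complex.exp (↑x * ↑(X i ω) * Complex.I) = c)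
    (k : ℕ) : ∀ᵐ ω ∂P, Complex.exp (↑x * ↑(∑ j ∈ Finset.range k, X j ω) * Complex.I) = c ^ k := by
  filter_upwards [ae_all_iff.mpr hX] with ω hω
  rw [exp_mul_sum_mul_I, Finset.prod_congr rfl fun j _ => hω j, Finset.prod_const,
    Finset.card_range]

end Characters

section Probability

variable {Ω : Type*} [MeasurableSpace Ω] {P : Measure Ω} [IsProbabilityMeasure P]

lemma exists_inv_ncard_le_measureReal_preimage_singleton {α : Type*} [MeasurableSpace α]
    [MeasurableSingletonClass α] {Y : Ω → α} (hY : Measurable Y) {s : Set α} (hs : s.Finite)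
    (hYs : ∀ᵐ ω ∂P, Y ω ∈ s) :
    ∃ t ∈ s, (s.ncard : ℝ)⁻¹ ≤ P.real (Y ⁻¹' {t}) := by
  have hsum : ∑ t ∈ hs.toFinset, P.real (Y ⁻¹' {t}) = 1 := by
    rw [sum_measureReal_preimage_singleton _ fun t _ => hY (measurableSet_singleton t),
      hs.coe_toFinset, measureReal_def,
      (mem_ae_iff_prob_eq_one (hY hs.measurableSet)).mp hYs, ENNReal.toReal_one]
  have hne : hs.toFinset.Nonempty :=
    Finset.nonempty_of_sum_ne_zero (by rw [hsum]; exact one_ne_zero)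
  obtain ⟨t, ht, hle⟩ := Finset.exists_le_of_sum_le hne
    (f := fun _ => (hs.toFinset.card : ℝ)⁻¹) (g := fun t => P.real (Y ⁻¹' {t})) (by
      rw [hsum, Finset.sum_const, nsmul_eq_mul, mul_inv_cancel₀ (by simpa using hne.card_pos.ne')])
  exact ⟨t, hs.mem_toFinset.mp ht, by rwa [Set.ncard_eq_toFinset_card s hs]⟩

variable (P) in
noncomputable def kolmogorovDistUniform (Y : Ω → ℝ) : ℝ :=
  ⨆ t : Set.Icc (0 : ℝ) 1, |P.real {ω | Y ω ≤ t} - t|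

lemma abs_measureReal_le_sub_le_kolmogorovDistUniform (Y : Ω → ℝ) {t : ℝ}
    (ht : t ∈ Set.Icc (0 : ℝ) 1) :
    |P.real {ω | Y ω ≤ t} - t| ≤ kolmogorovDistUniform P Y := by
  refine le_ciSup (f := fun t : Set.Icc (0 : ℝ) 1 => |P.real {ω | Y ω ≤ t} - t|)
    ⟨1, ?_⟩ ⟨t, ht⟩
  rintro _ ⟨⟨u, hu0, hu1⟩, rfl⟩
  have h0 : 0 ≤ P.real {ω | Y ω ≤ u} := measureReal_nonneg
  have h1 : P.real {ω | Y ω ≤ u} ≤ 1 := measureReal_le_one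
  exact abs_sub_le_iff.mpr ⟨by linarith, by linarith⟩

lemma le_kolmogorovDistUniform_of_le_measureReal_singleton {Y : Ω → ℝ} (hY : Measurable Y)
    {t₀ p : ℝ} (ht₀ : t₀ ∈ Set.Icc (0 : ℝ) 1) (hp : 0 < p) (hpt₀ : p ≤ P.real (Y ⁻¹' {t₀})) :
    p / 4 ≤ kolmogorovDistUniform P Y := by
  set F : ℝ → ℝ := fun t => P.real {ω | Y ω ≤ t}
  have hFt₀ : p ≤ F t₀ := hpt₀.trans (measureReal_mono fun ω hω => le_of_eq hω)
  have hjump : ∀ s < t₀, F s + p ≤ F t₀ := by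
    intro s hs
    have hdisj : Disjoint {ω | Y ω ≤ s} (Y ⁻¹' {t₀}) :=
      Set.disjoint_left.mpr fun ω (h1 : Y ω ≤ s) (h2 : Y ω = t₀) => by linarith
    calc F s + p ≤ P.real ({ω | Y ω ≤ s} ∪ Y ⁻¹' {t₀}) := by
          rw [measureReal_union hdisj (hY (measurableSet_singleton t₀))]; gcongr
      _ ≤ F t₀ := measureReal_mono (Set.union_subset (fun ω (h : Y ω ≤ s) => by
          show Y ω ≤ t₀; linarith) fun ω hω => le_of_eq hω)
  -- Either `t₀ ≤ p/2`, so `F t₀ - t₀ ≥ p/2`, or `F` gains `p` on `[t₀ - p/2, t₀]` while `t`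
  -- gains only `p/2`.
  have hdist := abs_measureReal_le_sub_le_kolmogorovDistUniform (P := P) Y ht₀
  rcases le_or_gt t₀ (p / 2) with hsmall | hlarge
  · linarith [le_abs_self (F t₀ - t₀)]
  · have hs : t₀ - p / 2 ∈ Set.Icc (0 : ℝ) 1 := ⟨by linarith, by linarith [ht₀.2]⟩
    have hdist' := abs_measureReal_le_sub_le_kolmogorovDistUniform (P := P) Y hs
    linarith [hjump (t₀ - p / 2) (by linarith), le_abs_self (F t₀ - t₀),
      neg_abs_le (F (t₀ - p / 2) - (t₀ - p / 2))]

end Probability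

lemma le_kolmogorovDistUniform_fract {Ω : Type*} [MeasurableSpace Ω] {P : Measure Ω}
    [IsProbabilityMeasure P] {h : ℤ} (hh : h ≠ 0) {Y : Ω → ℝ} (hY : Measurable Y) {d : ℂ}
    (hYd : ∀ᵐ ω ∂P, Complex.exp (↑(2 * Real.pi * h) * ↑(Y ω) * Complex.I) = d) :
    1 / (4 * h.natAbs) ≤ kolmogorovDistUniform P fun ω => Int.fract (Y ω) := by
  set A := {y ∈ Set.Ico (0 : ℝ) 1 | Complex.exp (↑(2 * Real.pi * h) * ↑y * Complex.I) = d}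
  obtain ⟨hfin, hcard⟩ : A.Finite ∧ A.ncard ≤ h.natAbs := finite_and_ncard_le_natAbs hh d
  have hmem : ∀ᵐ ω ∂P, Int.fract (Y ω) ∈ A := by
    filter_upwards [hYd] with ω hω
    exact ⟨⟨Int.fract_nonneg _, Int.fract_lt_one _⟩, (exp_two_pi_int_mul_fract_mul_I h _).trans hω⟩
  obtain ⟨t₀, ht₀, hmass⟩ :=
    exists_inv_ncard_le_measureReal_preimage_singleton (measurable_fract.comp hY) hfin hmem
  have hpos : 0 < A.ncard := (Set.ncard_pos hfin).mpr ⟨t₀, ht₀⟩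
  calc 1 / (4 * h.natAbs : ℝ) ≤ (A.ncard : ℝ)⁻¹ / 4 := by
        rw [one_div, mul_comm, mul_inv, ← div_eq_mul_inv]; gcongr
    _ ≤ _ := le_kolmogorovDistUniform_of_le_measureReal_singleton (measurable_fract.comp hY)
        (Set.Ico_subset_Icc_self ht₀.1) (by positivity) hmass

theorem stmt8_general
    {Ω : Type*} [MeasurableSpace Ω] (P : Measure Ω) [IsProbabilityMeasure P]
    (X : ℕ → Ω → ℝ) (hXm : ∀ i, Measurable (X i))
    (hident : ∀ i, Measure.map (X i) P = Measure.map (X 0) P)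
    (S : ℕ → Ω → ℝ) (hS : ∀ k ω, S k ω = ∑ j ∈ Finset.range k, X j ω)
    (ψ : ℕ → ℝ)
    (hψ : ∀ k, ψ k = ⨆ t : Set.Icc (0:ℝ) 1,
        |(P {ω | Int.fract (S k ω) ≤ (t : ℝ)}).toReal - (t : ℝ)|)
    (hψ0 : Tendsto ψ atTop (nhds 0))
    (φ : ℝ → ℂ) (hφ : ∀ x, φ x = ∫ ω, Complex.exp (x * X 0 ω * Complex.I) ∂P) :
    ∀ h : ℤ, h ≠ 0 → ‖φ (2 * Real.pi * h)‖ < 1 := by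
  intro h hh
  set e : ℝ → ℂ := fun y => Complex.exp (↑(2 * Real.pi * h) * ↑y * Complex.I) with he
  have he_meas : Measurable e := by fun_prop
  have hnorm : ∀ᵐ ω ∂P, ‖e (X 0 ω)‖ ≤ 1 := ae_of_all _ fun ω => by
    simp [he, Complex.norm_exp]
  rcases ae_eq_const_or_norm_integral_lt_of_norm_le_const hnorm with hconst | hlt
  swap
  · rw [hφ]
    simpa only [probReal_univ, mul_one] using hlt
  have hX : ∀ i, ∀ᵐ ω ∂P, e (X i ω) = ⨍ ω, e (X 0 ω) ∂P := fun i =>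
    IdentDistrib.ae_mem_snd ⟨(hXm 0).aemeasurable, (hXm i).aemeasurable, (hident i).symm⟩
      (he_meas (measurableSet_singleton _)) hconst
  have hS_meas : ∀ k, Measurable (S k) := fun k => by
    rw [funext (hS k)]; fun_prop
  have hψ_lb : ∀ k, 1 / (4 * h.natAbs) ≤ ψ k := fun k => by
    rw [hψ k]
    exact le_kolmogorovDistUniform_fract hh (hS_meas k)
      (by simpa only [hS] using ae_exp_mul_sum_mul_I_eq_pow _ hX k)
  exact absurd (ge_of_tendsto' hψ0 hψ_lb) (not_le.mpr (by positivity))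

/-- If the fractional parts of the partial sums `S_k` of i.i.d. real
random variables converge to uniform in the Kolmogorov metric (`ψ(k) → 0`), then the
characteristic function `φ(x) = E exp(ixX₁)` satisfies `|φ(2πh)| < 1` for all nonzero
integers `h`. -/
theorem stmt8
    {Ω : Type*} [MeasurableSpace Ω] (P : Measure Ω) [IsProbabilityMeasure P]
    (X : ℕ → Ω → ℝ) (hXm : ∀ i, Measurable (X i))
    (hindep : iIndepFun X P)
    (hident : ∀ i, Measure.map (X i) P = Measure.map (X 0) P)
    (S : ℕ → Ω → ℝ) (hS : ∀ k ω, S k ω = ∑ j ∈ Finset.range k, X j ω)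
    (ψ : ℕ → ℝ)
    (hψ : ∀ k, ψ k = ⨆ t : Set.Icc (0:ℝ) 1,
        |(P {ω | Int.fract (S k ω) ≤ (t : ℝ)}).toReal - (t : ℝ)|)
    (hψ0 : Tendsto ψ atTop (nhds 0))
    (φ : ℝ → ℂ) (hφ : ∀ x, φ x = ∫ ω, Complex.exp (x * X 0 ω * Complex.I) ∂P) :
    ∀ h : ℤ, h ≠ 0 → ‖φ (2 * Real.pi * h)‖ < 1 :=
  stmt8_general P X hXm hident S hS ψ hψ hψ0 φ hφ
end

section
/- Let f be a 1-periodic trigonometric polynomial with ∫₀¹ f = 0 and Fourier coefficients f̂(h), and let X₁, X₂, … be i.i.d. real random variables with characteristic function φ satisfying |φ(2πh)| < 1 for all nonzero integers h and ψ(k) = sup_t |P({S_k} ≤ t) − t| summable in k. Let U be uniform on [0,1) independent of the X_j. Then C(f,f) := E f(U)² + 2 ∑_{k=1}^∞ E f(U) f(U + S_k) = ∑_{h ≠ 0} |f̂(h)|² (1 − |φ(2πh)|²) / |1 − φ(2πh)|². -/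
/-!
Write `e(x) = exp(2πix)`. Since `f` is real, `f(U) f(U + Y) = conj f(U) · f(U + Y)`; expanding
both factors in the modes `e(hx)`, the orthogonality `E e(mU) = [m = 0]` of the modes under the
uniform law, together with the independence of `U` and `Y`, collapses the double sum to
`∑ |c_h|² E e(hY)`. For `Y = S_k` this is `∑ |c_h|² φ(2πh)^k`, so `C(f,f)` is a finite combination
of geometric series, summed by `Re (1 + 2w/(1 - w)) = (1 - |w|²)/|1 - w|²`.
-/

open MeasureTheory ProbabilityTheory Complex
open scoped Real ComplexConjugate

lemma exp_two_pi_int_mul_add (h : ℤ) (x y : ℝ) :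
    exp (2 * π * h * ((x + y : ℝ) : ℂ) * I)
      = exp (2 * π * h * x * I) * exp (2 * π * h * y * I) := by
  rw [← exp_add]
  push_cast
  ring_nf

lemma conj_exp_two_pi_int_mul_mul_exp (h h' : ℤ) (x : ℝ) :
    conj (exp (2 * π * h * x * I)) * exp (2 * π * h' * x * I)
      = exp (2 * π * ((h' - h : ℤ) : ℂ) * x * I) := by
  rw [← exp_conj, ← exp_add]
  simp only [map_mul, conj_ofReal, conj_I, map_ofNat, map_intCast]
  push_cast
  ring_nf

lemma norm_exp_two_pi_int_mul (h : ℤ) (x : ℝ) : ‖exp (2 * π * h * x * I)‖ = 1 := by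
  rw [show (2 * π * h * x * I : ℂ) = ((2 * π * h * x : ℝ) : ℂ) * I by push_cast; ring]
  exact norm_exp_ofReal_mul_I _

lemma setIntegral_Ico_exp_two_pi_int_mul (m : ℤ) :
    ∫ x in Set.Ico (0:ℝ) 1, exp (2 * π * m * x * I) = if m = 0 then 1 else 0 := by
  rcases eq_or_ne m 0 with rfl | hm
  · simp
  have hc : (2 * π * m * I : ℂ) ≠ 0 := by
    simp [Real.pi_ne_zero, I_ne_zero, hm]
  rw [integral_Ico_eq_integral_Ioc, ← intervalIntegral.integral_of_le zero_le_one]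
  simp_rw [show ∀ x : ℝ, (2 * π * m * x * I : ℂ) = 2 * π * m * I * x from fun x => by ring]
  rw [integral_exp_mul_complex hc]
  have hper : exp (2 * π * m * I) = 1 := by
    rw [show (2 * π * m * I : ℂ) = m * (2 * π * I) by ring]
    exact exp_int_mul_two_pi_mul_I m
  simp [hper, hm]

section

variable {Ω : Type*} [MeasurableSpace Ω] {P : Measure Ω}

lemma integral_exp_two_pi_int_mul_of_map_eq_uniform {U : Ω → ℝ} (hU : Measurable U)
    (hUunif : P.map U = volume.restrict (Set.Ico 0 1)) (m : ℤ) :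
    ∫ ω, exp (2 * π * m * U ω * I) ∂P = if m = 0 then 1 else 0 := by
  rw [← setIntegral_Ico_exp_two_pi_int_mul, ← hUunif, integral_map hU.aemeasurable (by fun_prop)]

lemma integral_exp_mul_exp_of_indepFun_of_map_eq_uniform {U Y : Ω → ℝ} (hU : Measurable U)
    (hY : Measurable Y) (hUunif : P.map U = volume.restrict (Set.Ico 0 1))
    (hUY : IndepFun U Y P) (m h : ℤ) :
    ∫ ω, exp (2 * π * m * U ω * I) * exp (2 * π * h * Y ω * I) ∂P
      = if m = 0 then charFun (P.map Y) (2 * π * h) else 0 := by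
  rw [hUY.integral_fun_comp_mul_comp (f := fun x : ℝ => exp (2 * π * m * x * I))
      (g := fun y : ℝ => exp (2 * π * h * y * I)) hU.aemeasurable hY.aemeasurable
      (by fun_prop) (by fun_prop),
    integral_exp_two_pi_int_mul_of_map_eq_uniform hU hUunif, charFun_apply_real,
    integral_map hY.aemeasurable (by fun_prop)]
  split_ifs <;> simp

lemma integral_mul_comp_add_of_indepFun_of_map_eq_uniform [IsFiniteMeasure P]
    {U Y : Ω → ℝ} (hU : Measurable U) (hY : Measurable Y)
    (hUunif : P.map U = volume.restrict (Set.Ico 0 1)) (hUY : IndepFun U Y P)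
    {s : Finset ℤ} {c : ℤ → ℂ} {f : ℝ → ℝ}
    (hf : ∀ x : ℝ, (f x : ℂ) = ∑ h ∈ s, c h * exp (2 * π * h * x * I)) :
    ((∫ ω, f (U ω) * f (U ω + Y ω) ∂P : ℝ) : ℂ)
      = ∑ h ∈ s, ((‖c h‖ ^ 2 : ℝ) : ℂ) * charFun (P.map Y) (2 * π * h) := by
  have hexpand : ∀ ω, ((f (U ω) * f (U ω + Y ω) : ℝ) : ℂ) = ∑ h ∈ s, ∑ h' ∈ s,
      conj (c h) * c h' * (exp (2 * π * ((h' - h : ℤ) : ℂ) * U ω * I)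
        * exp (2 * π * h' * Y ω * I)) := by
    intro ω
    rw [ofReal_mul, ← conj_ofReal, hf, hf, map_sum, Finset.sum_mul_sum]
    refine Finset.sum_congr rfl fun h _ => Finset.sum_congr rfl fun h' _ => ?_
    rw [exp_two_pi_int_mul_add, ← conj_exp_two_pi_int_mul_mul_exp, map_mul]
    ring
  have hint : ∀ (a : ℂ) (m h' : ℤ), Integrable (fun ω =>
      a * (exp (2 * π * m * U ω * I) * exp (2 * π * h' * Y ω * I))) P := by
    intro a m h'
    refine Integrable.of_bound (by fun_prop) ‖a‖ (Filter.Eventually.of_forall fun ω => ?_)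
    simp [norm_exp_two_pi_int_mul]
  rw [← integral_complex_ofReal, integral_congr_ae (Filter.Eventually.of_forall hexpand),
    integral_finsetSum _ fun h _ => integrable_finsetSum _ fun h' _ => hint _ _ _]
  refine Finset.sum_congr rfl fun h hh => ?_
  rw [integral_finsetSum _ fun h' _ => hint _ _ _]
  simp_rw [integral_const_mul,
    integral_exp_mul_exp_of_indepFun_of_map_eq_uniform hU hY hUunif hUY, sub_eq_zero, mul_ite,
    mul_zero, Finset.sum_ite_eq' s h, if_pos hh, ofReal_pow, ← mul_conj', mul_comm (c h)]

lemma charFun_map_sum_range_eq_pow {E : Type*} [MeasurableSpace E] [NormedAddCommGroup E]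
    [InnerProductSpace ℝ E] [BorelSpace E] [SecondCountableTopology E] {X : ℕ → Ω → E} (hXm : ∀ i, AEMeasurable (X i) P)
    (hindep : iIndepFun X P) (hident : ∀ i, P.map (X i) = P.map (X 0)) (k : ℕ) (t : E) :
    charFun (P.map fun ω => ∑ j ∈ Finset.range k, X j ω) t = charFun (P.map (X 0)) t ^ k := by
  rw [(hindep.restrict _).charFun_map_fun_finsetSum_eq_prod fun i _ => hXm i]
  simp [hident]

lemma indepFun_sum_range_of_indepFun_seq {U : Ω → ℝ} {X : ℕ → Ω → ℝ}
    (hUX : IndepFun U (fun ω => (X · ω)) P) (k : ℕ) :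
    IndepFun U (fun ω => ∑ j ∈ Finset.range k, X j ω) P :=
  hUX.comp measurable_id (Finset.measurable_sum _ fun j _ => measurable_pi_apply j)

end

lemma re_one_add_two_mul_tsum_pow_succ {w : ℂ} (hw : ‖w‖ < 1) :
    (1 + 2 * ∑' k : ℕ, w ^ (k + 1)).re = (1 - ‖w‖ ^ 2) / ‖1 - w‖ ^ 2 := by
  have hw1 : 1 - w ≠ 0 := sub_ne_zero.mpr (by rintro rfl; simp at hw)
  have hsum : 1 + 2 * ∑' k : ℕ, w ^ (k + 1) = (1 + w) / (1 - w) := by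
    simp_rw [pow_succ', tsum_mul_left, tsum_geometric_of_norm_lt_one hw]
    field_simp
    ring
  rw [hsum, div_re, Complex.sq_norm, Complex.sq_norm]
  have hn : normSq (1 - w) ≠ 0 := normSq_eq_zero.not.mpr hw1
  field_simp
  simp only [normSq_apply, add_re, sub_re, one_re, add_im, sub_im, one_im]
  ring

lemma apply_zero_add_two_mul_tsum_succ_eq_sum {ι : Type*} {s : Finset ι} {a : ι → ℝ}
    {w : ι → ℂ} (hw : ∀ i ∈ s, ‖w i‖ < 1) {r : ℕ → ℝ}
    (hr : ∀ k, (r k : ℂ) = ∑ i ∈ s, (a i : ℂ) * w i ^ k) :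
    r 0 + 2 * ∑' k, r (k + 1) = ∑ i ∈ s, a i * (1 - ‖w i‖ ^ 2) / ‖1 - w i‖ ^ 2 := by
  have hsummable : ∀ i ∈ s, Summable fun k : ℕ => (a i : ℂ) * w i ^ (k + 1) := fun i hi =>
    ((summable_geometric_of_norm_lt_one (hw i hi)).comp_injective
      (add_left_injective 1)).mul_left _
  have hcomplex : ((r 0 + 2 * ∑' k, r (k + 1) : ℝ) : ℂ)
      = ∑ i ∈ s, (a i : ℂ) * (1 + 2 * ∑' k : ℕ, w i ^ (k + 1)) := by
    push_cast [ofReal_tsum]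
    rw [hr, tsum_congr fun k => hr (k + 1), Summable.tsum_finsetSum hsummable, Finset.mul_sum,
      ← Finset.sum_add_distrib]
    refine Finset.sum_congr rfl fun i _ => ?_
    rw [tsum_mul_left]
    ring
  rw [← ofReal_re (r 0 + _), hcomplex, re_sum]
  refine Finset.sum_congr rfl fun i hi => ?_
  rw [re_ofReal_mul, re_one_add_two_mul_tsum_pow_succ (hw i hi), mul_div_assoc]

theorem stmt9_general
    {Ω : Type*} [MeasurableSpace Ω] (P : Measure Ω) [IsProbabilityMeasure P]
    (X : ℕ → Ω → ℝ) (hXm : ∀ i, Measurable (X i))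
    (hindep : iIndepFun (m := fun _ => Real.measurableSpace) X P)
    (hident : ∀ i, Measure.map (X i) P = Measure.map (X 0) P)
    (S : ℕ → Ω → ℝ) (hS : ∀ k ω, S k ω = ∑ j ∈ Finset.range k, X j ω)
    (φ : ℝ → ℂ) (hφ : ∀ x, φ x = ∫ ω, Complex.exp (x * X 0 ω * Complex.I) ∂P)
    (hφlt : ∀ h : ℤ, h ≠ 0 → ‖φ (2 * Real.pi * h)‖ < 1)
    (H : ℕ) (c : ℤ → ℂ) (hc0 : c 0 = 0)
    (f : ℝ → ℝ)
    (hf : ∀ x : ℝ, (f x : ℂ) =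
      ∑ h ∈ Finset.Icc (-(H:ℤ)) (H:ℤ), c h * Complex.exp (2 * Real.pi * h * x * Complex.I))
    (U : Ω → ℝ) (hUm : Measurable U)
    (hUunif : Measure.map U P = volume.restrict (Set.Ico (0:ℝ) 1))
    (hUindep : IndepFun U (fun ω => (X · ω)) P) :
    (∫ ω, (f (U ω))^2 ∂P) + 2 * ∑' k : ℕ, ∫ ω, f (U ω) * f (U ω + S (k+1) ω) ∂P =
      ∑ h ∈ (Finset.Icc (-(H:ℤ)) (H:ℤ)).erase 0,
        (‖c h‖)^2 * (1 - (‖φ (2 * Real.pi * h)‖)^2) /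
          (‖1 - φ (2 * Real.pi * h)‖)^2 := by
  obtain rfl : S = fun k ω => ∑ j ∈ Finset.range k, X j ω := funext fun k => funext (hS k)
  obtain rfl : φ = charFun (P.map (X 0)) := funext fun t => by
    rw [hφ, charFun_apply_real, integral_map (hXm 0).aemeasurable (by fun_prop)]
  have hcorr : ∀ k, ((∫ ω, f (U ω) * f (U ω + ∑ j ∈ Finset.range k, X j ω) ∂P : ℝ) : ℂ)
      = ∑ h ∈ (Finset.Icc (-(H:ℤ)) (H:ℤ)).erase 0,
          ((‖c h‖ ^ 2 : ℝ) : ℂ) * charFun (P.map (X 0)) (2 * π * h) ^ k := by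
    intro k
    rw [integral_mul_comp_add_of_indepFun_of_map_eq_uniform hUm
      (Finset.measurable_sum _ fun j _ => hXm j) hUunif
      (indepFun_sum_range_of_indepFun_seq hUindep k) hf,
      ← Finset.sum_erase _ (a := 0) (by simp [hc0])]
    simp_rw [charFun_map_sum_range_eq_pow (fun i => (hXm i).aemeasurable) hindep hident]
  have hdiag : ∫ ω, f (U ω) ^ 2 ∂P
      = ∫ ω, f (U ω) * f (U ω + ∑ j ∈ Finset.range 0, X j ω) ∂P := by
    simp [sq]
  rw [hdiag]
  exact apply_zero_add_two_mul_tsum_succ_eq_sum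
    (fun h hh => hφlt h (Finset.ne_of_mem_erase hh)) hcorr

/-- For a mean-zero real trigonometric polynomial
`f(x) = ∑_{0<|h|≤H} c_h e^{2πihx}`, i.i.d. sums `S_k` with characteristic function
`φ` satisfying `|φ(2πh)| < 1` for `h ≠ 0` and summable Kolmogorov distances `ψ(k)`,
and `U` uniform on `[0,1)` independent of the sequence,
`C(f,f) = E f(U)² + 2 ∑_{k≥1} E f(U) f(U+S_k)
        = ∑_{h≠0} |c_h|² (1 − |φ(2πh)|²)/|1 − φ(2πh)|²`. -/
theorem stmt9
    {Ω : Type*} [MeasurableSpace Ω] (P : Measure Ω) [IsProbabilityMeasure P]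
    (X : ℕ → Ω → ℝ) (hXm : ∀ i, Measurable (X i))
    (hindep : iIndepFun (m := fun _ => Real.measurableSpace) X P)
    (hident : ∀ i, Measure.map (X i) P = Measure.map (X 0) P)
    (S : ℕ → Ω → ℝ) (hS : ∀ k ω, S k ω = ∑ j ∈ Finset.range k, X j ω)
    (ψ : ℕ → ℝ)
    (hψ : ∀ k, ψ k = ⨆ t : Set.Icc (0:ℝ) 1,
        |(P {ω | Int.fract (S k ω) ≤ (t : ℝ)}).toReal - (t : ℝ)|)
    (hψsum : Summable (fun k : ℕ => ψ (k+1)))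
    (φ : ℝ → ℂ) (hφ : ∀ x, φ x = ∫ ω, Complex.exp (x * X 0 ω * Complex.I) ∂P)
    (hφlt : ∀ h : ℤ, h ≠ 0 → ‖φ (2 * Real.pi * h)‖ < 1)
    (H : ℕ) (c : ℤ → ℂ) (hc0 : c 0 = 0)
    (f : ℝ → ℝ)
    (hf : ∀ x : ℝ, (f x : ℂ) =
      ∑ h ∈ Finset.Icc (-(H:ℤ)) (H:ℤ), c h * Complex.exp (2 * Real.pi * h * x * Complex.I))
    (U : Ω → ℝ) (hUm : Measurable U)
    (hUunif : Measure.map U P = volume.restrict (Set.Ico (0:ℝ) 1))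
    (hUindep : IndepFun U (fun ω => (X · ω)) P) :
    (∫ ω, (f (U ω))^2 ∂P) + 2 * ∑' k : ℕ, ∫ ω, f (U ω) * f (U ω + S (k+1) ω) ∂P =
      ∑ h ∈ (Finset.Icc (-(H:ℤ)) (H:ℤ)).erase 0,
        (‖c h‖)^2 * (1 - (‖φ (2 * Real.pi * h)‖)^2) /
          (‖1 - φ (2 * Real.pi * h)‖)^2 :=
  stmt9_general P X hXm hindep hident S hS φ hφ hφlt H c hc0 f hf U hUm hUunif hUindep
end

section
/- Let X be a real random variable and U a random variable uniformly distributed on [0,1), independent of X. Then the fractional part {X + U} is uniformly distributed on [0,1) and is independent of X. -/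
open MeasureTheory ProbabilityTheory Set Function

/-
Through the section `ℝ/ℤ → [0,1)`, the law of `{W}` for `W` uniform on `[a, a + 1)` is the image
of Haar measure on `ℝ/ℤ`, so it does not depend on `a`; hence every map `u ↦ {x + u}` preserves
the uniform law on `[0,1)`. Thus `(X, U) ↦ (X, {X + U})` is a skew product whose fibre maps
preserve the law of `U`, and it maps the product law, which by independence is the joint law
of `(X, U)`, to itself.
-/

lemma UnitAddCircle.map_mk_volume_restrict_Ico (a : ℝ) :
    Measure.map ((↑) : ℝ → UnitAddCircle) (volume.restrict (Ico a (a + 1))) = volume := by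
  rw [Measure.restrict_congr_set Ico_ae_eq_Ioc]
  exact (UnitAddCircle.measurePreserving_mk a).map_eq

lemma Real.map_fract_volume_restrict_Ico (a : ℝ) :
    Measure.map Int.fract (volume.restrict (Ico a (a + 1))) = volume.restrict (Ico 0 1) := by
  have hsection : Measurable fun y : UnitAddCircle ↦ (AddCircle.equivIco 1 0 y : ℝ) :=
    measurable_subtype_coe.comp (AddCircle.measurableEquivIco 1 0).measurable
  have hfract : Int.fract = (fun y : UnitAddCircle ↦ (AddCircle.equivIco 1 0 y : ℝ)) ∘ (↑) :=
    funext fun r ↦ by simp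
  have h_law (b : ℝ) : Measure.map Int.fract (volume.restrict (Ico b (b + 1))) =
      Measure.map (fun y : UnitAddCircle ↦ (AddCircle.equivIco 1 0 y : ℝ)) volume := by
    rw [hfract, ← Measure.map_map hsection AddCircle.measurable_mk',
      UnitAddCircle.map_mk_volume_restrict_Ico]
  have h_zero : Measure.map Int.fract (volume.restrict (Ico (0 : ℝ) 1)) =
      volume.restrict (Ico 0 1) := by
    rw [Measure.map_congr (g := id), Measure.map_id]
    filter_upwards [ae_restrict_mem measurableSet_Ico] with u hu
    exact Int.fract_eq_self.2 hu
  rw [h_law, ← h_law 0, zero_add, h_zero]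

lemma Real.map_fract_const_add_volume_restrict_Ico (x : ℝ) :
    Measure.map (fun u ↦ Int.fract (x + u)) (volume.restrict (Ico (0 : ℝ) 1)) =
      volume.restrict (Ico 0 1) := by
  have htranslate : Measure.map (x + ·) (volume.restrict (Ico (0 : ℝ) 1)) =
      volume.restrict (Ico x (x + 1)) := by
    have := (measurePreserving_add_left volume x).restrict_preimage
      (measurableSet_Ico (a := x) (b := x + 1))
    rw [preimage_const_add_Ico, sub_self, add_sub_cancel_left] at this
    exact this.map_eq
  calc Measure.map (fun u ↦ Int.fract (x + u)) (volume.restrict (Ico (0 : ℝ) 1))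
      = Measure.map Int.fract (Measure.map (x + ·) (volume.restrict (Ico (0 : ℝ) 1))) :=
        (Measure.map_map measurable_fract (measurable_const_add x)).symm
    _ = volume.restrict (Ico 0 1) := by
        rw [htranslate, Real.map_fract_volume_restrict_Ico]

namespace ProbabilityTheory

variable {Ω α β : Type*} [MeasurableSpace Ω] [MeasurableSpace α] [MeasurableSpace β]
  {P : Measure Ω} [IsProbabilityMeasure P] {X : Ω → α} {U : Ω → β} {g : α → β → β}

lemma IndepFun.map_prodMk_skew_eq_prod (hindep : IndepFun X U P) (hX : Measurable X)
    (hU : Measurable U) (hg : Measurable (uncurry g))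
    (hg_fibre : ∀ᵐ x ∂P.map X, (P.map U).map (g x) = P.map U) :
    P.map (fun ω ↦ (X ω, g (X ω) (U ω))) = (P.map X).prod (P.map U) := by
  have hskew : MeasurePreserving (fun p : α × β ↦ (p.1, g p.1 p.2))
      ((P.map X).prod (P.map U)) ((P.map X).prod (P.map U)) :=
    (MeasurePreserving.id _).skew_product hg hg_fibre
  have hjoint := (indepFun_iff_map_prod_eq_prod_map_map hX.aemeasurable hU.aemeasurable).mp hindep
  rw [← hskew.map_eq, ← hjoint, Measure.map_map hskew.measurable (hX.prodMk hU)]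
  rfl

lemma IndepFun.map_skew_eq_and_indepFun (hindep : IndepFun X U P) (hX : Measurable X)
    (hU : Measurable U) (hg : Measurable (uncurry g))
    (hg_fibre : ∀ᵐ x ∂P.map X, (P.map U).map (g x) = P.map U) :
    P.map (fun ω ↦ g (X ω) (U ω)) = P.map U ∧ IndepFun (fun ω ↦ g (X ω) (U ω)) X P := by
  have hgXU : Measurable fun ω ↦ g (X ω) (U ω) := hg.comp (hX.prodMk hU)
  have hjoint := hindep.map_prodMk_skew_eq_prod hX hU hg hg_fibre
  have hlaw : P.map (fun ω ↦ g (X ω) (U ω)) = P.map U := by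
    calc P.map (fun ω ↦ g (X ω) (U ω))
        = (P.map fun ω ↦ (X ω, g (X ω) (U ω))).map Prod.snd :=
          (Measure.map_map measurable_snd (hX.prodMk hgXU)).symm
      _ = P.map U := by
          rw [hjoint, Measure.map_snd_prod, Measure.map_apply hX .univ, preimage_univ,
            measure_univ, one_smul]
  refine ⟨hlaw, IndepFun.symm ?_⟩
  rw [indepFun_iff_map_prod_eq_prod_map_map hX.aemeasurable hgXU.aemeasurable, hjoint, hlaw]

end ProbabilityTheory

/-- If `X` is a real random variable and `U` is uniform on `[0,1)`
and independent of `X`, then the fractional part `{X + U}` is uniformly distributed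
on `[0,1)` and independent of `X`. -/
theorem stmt12
    {Ω : Type*} [MeasurableSpace Ω] (P : Measure Ω) [IsProbabilityMeasure P]
    (X U : Ω → ℝ) (hX : Measurable X) (hU : Measurable U)
    (hindep : IndepFun X U P)
    (hunif : Measure.map U P = volume.restrict (Set.Ico (0:ℝ) 1)) :
    Measure.map (fun ω => Int.fract (X ω + U ω)) P = volume.restrict (Set.Ico (0:ℝ) 1) ∧
      IndepFun (fun ω => Int.fract (X ω + U ω)) X P := by
  rw [← hunif]
  refine hindep.map_skew_eq_and_indepFun (g := fun x u ↦ Int.fract (x + u)) hX hU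
    (measurable_fst.add measurable_snd).fract (ae_of_all _ fun x ↦ ?_)
  rw [hunif]
  exact Real.map_fract_const_add_volume_restrict_Ico x
end

section
/- Let K and K′ be compact subsets of C[0,1] (with the supremum norm), and let T₁ ⊆ T₂ ⊆ ⋯ be finite subsets of [0,1] whose union is dense in [0,1]. If for every n the sets of restrictions {f|_{T_n} : f ∈ K} and {f|_{T_n} : f ∈ K′} coincide, then K = K′. -/
lemma stmt16_incl
    (K K' : Set C(Set.Icc (0:ℝ) 1, ℝ))
    (hK' : IsCompact K')
    (T : ℕ → Set (Set.Icc (0:ℝ) 1))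
    (hmono : ∀ n, T n ⊆ T (n+1))
    (hdense : Dense (⋃ n, T n))
    (hr : ∀ n, ∀ f ∈ K, ∃ f' ∈ K', ∀ t ∈ T n, f t = f' t) :
    K ⊆ K' := by
  have hMono : Monotone T := monotone_nat_of_le_succ hmono
  intro f hf
  choose f' hmem heq using fun n => hr n f hf
  obtain ⟨g, hg, φ, hφ, htend⟩ := hK'.tendsto_subseq (fun n => hmem n)
  have hfg : (f : Set.Icc (0:ℝ) 1 → ℝ) = g := by
    apply Continuous.ext_on hdense f.continuous g.continuous
    intro t ht
    obtain ⟨s, ⟨n, rfl⟩, htn⟩ := ht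
    have hpt : Filter.Tendsto (fun m => f' (φ m) t) Filter.atTop (nhds (g t)) :=
      ((continuous_eval_const t).continuousAt.tendsto.comp htend)
    have hev : ∀ᶠ m in Filter.atTop, f' (φ m) t = f t := by
      filter_upwards [Filter.eventually_ge_atTop n] with m hm
      exact (heq (φ m) t (hMono (hm.trans hφ.le_apply) htn)).symm
    exact tendsto_nhds_unique (hpt.congr' hev) tendsto_const_nhds |>.symm ▸
      (tendsto_nhds_unique (hpt.congr' hev) tendsto_const_nhds).symm
  have : f = g := ContinuousMap.ext fun t => congrFun hfg t
  rwa [this]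

/-- If `K, K′` are compact subsets of `C[0,1]`, `T₁ ⊆ T₂ ⊆ ⋯` are
finite subsets of `[0,1]` with dense union, and the sets of restrictions of `K` and
`K′` to each `T_n` coincide, then `K = K′`. -/
theorem stmt16
    (K K' : Set C(Set.Icc (0:ℝ) 1, ℝ))
    (hK : IsCompact K) (hK' : IsCompact K')
    (T : ℕ → Set (Set.Icc (0:ℝ) 1))
    (hfin : ∀ n, (T n).Finite)
    (hmono : ∀ n, T n ⊆ T (n+1))
    (hdense : Dense (⋃ n, T n))
    (hrestr : ∀ n,
      {g : T n → ℝ | ∃ f ∈ K, ∀ t : T n, g t = f t} =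
        {g : T n → ℝ | ∃ f ∈ K', ∀ t : T n, g t = f t}) :
    K = K' := by
  have key : ∀ (A B : Set C(Set.Icc (0:ℝ) 1, ℝ)),
      (∀ n, {g : T n → ℝ | ∃ f ∈ A, ∀ t : T n, g t = f t} =
        {g : T n → ℝ | ∃ f ∈ B, ∀ t : T n, g t = f t}) →
      ∀ n, ∀ f ∈ A, ∃ f' ∈ B, ∀ t ∈ T n, f t = f' t := by
    intro A B h n f hfA
    have : (fun t : T n => f t) ∈
        {g : T n → ℝ | ∃ f ∈ B, ∀ t : T n, g t = f t} := by
      rw [← h n]; exact ⟨f, hfA, fun t => rfl⟩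
    obtain ⟨f', hf', hfe⟩ := this
    exact ⟨f', hf', fun t ht => hfe ⟨t, ht⟩⟩
  apply Set.Subset.antisymm
  · exact stmt16_incl K K' hK' T hmono hdense (key K K' hrestr)
  · exact stmt16_incl K' K hK T hmono hdense (key K' K (fun n => (hrestr n).symm))
end
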